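/- arXiv:2405.05103 — 12 statements merged into one kernel-verified Lean document; each statement's English description precedes it below -/
import Mathlib

section
/- Fix real numbers d₁,…,d_s and suppose the interval I = (𝓛, 𝓡) is non-empty. Suppose lim_{z→𝓛⁺} g(z) = +∞, lim_{z→𝓡⁻} g(z) = −∞, lim_{z→𝓛⁺} g′(z) = −∞, and lim_{z→𝓡⁻} g′(z) = −∞. Then there exists K ∈ ℝ such that the equation g(z) = K has at least two distinct solutions z₁, z₂ ∈ I with g′(z₁) < 0 and g′(z₂) < 0 if and only if there exists a point z̃ ∈ I with g′(z̃) > 0. (This is Lemma 4.2(i).) -/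
open Finset

/-- The function `g` from the paper (eq. (3.4)/(4.4)), written with explicit sign classes. -/
noncomputable def gFun {s : ℕ} (S1 S2 S3 S4 : Finset (Fin s)) (a d : Fin s → ℝ) (z : ℝ) : ℝ :=
  ∑ i ∈ S1, a i * Real.log (z + d i) - ∑ i ∈ S2, a i * Real.log (d i - z)
    + ∑ i ∈ S3, a i * Real.log (d i - z) - ∑ i ∈ S4, a i * Real.log (z + d i)

/-- The derivative `g'` of `g` (eq. (4.10)). -/
noncomputable def gDeriv {s : ℕ} (S1 S2 S3 S4 : Finset (Fin s)) (a d : Fin s → ℝ) (z : ℝ) : ℝ :=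
  ∑ i ∈ S1, a i / (z + d i) + ∑ i ∈ S2, a i / (d i - z)
    - ∑ i ∈ S3, a i / (d i - z) - ∑ i ∈ S4, a i / (z + d i)

/-- Membership in the open interval `I = (𝓛, 𝓡)`, where `𝓛 = max_{i ∈ S1 ∪ S4} (-d i)`
(or `-∞` if `S1 ∪ S4 = ∅`) and `𝓡 = min_{i ∈ S2 ∪ S3} d i` (or `+∞` if `S2 ∪ S3 = ∅`). -/
def memI {s : ℕ} (S1 S2 S3 S4 : Finset (Fin s)) (d : Fin s → ℝ) (z : ℝ) : Prop :=
  (∀ i ∈ S1 ∪ S4, -d i < z) ∧ (∀ i ∈ S2 ∪ S3, z < d i)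

/-- The multistability criterion: there exist pairwise distinct `d i`, a level `K` and two
distinct points of `I` where `g` takes the value `K` with negative derivative. -/
def MultistabCriterion {s : ℕ} (S1 S2 S3 S4 : Finset (Fin s)) (a : Fin s → ℝ) : Prop :=
  ∃ d : Fin s → ℝ, Function.Injective d ∧
    ∃ K z₁ z₂ : ℝ, z₁ ≠ z₂ ∧
      memI S1 S2 S3 S4 d z₁ ∧ memI S1 S2 S3 S4 d z₂ ∧
      gFun S1 S2 S3 S4 a d z₁ = K ∧ gFun S1 S2 S3 S4 a d z₂ = K ∧
      gDeriv S1 S2 S3 S4 a d z₁ < 0 ∧ gDeriv S1 S2 S3 S4 a d z₂ < 0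

/-- The filter of approach to the left endpoint `𝓛` of `I` from the right:
`𝓝[>] 𝓛` if `𝓛 = max_{i ∈ S1 ∪ S4} (-d i)` is finite, and `atBot` if `𝓛 = -∞`. -/
noncomputable def leftFilter {s : ℕ} (S1 S4 : Finset (Fin s)) (d : Fin s → ℝ) : Filter ℝ :=
  if h : (S1 ∪ S4).Nonempty then
    nhdsWithin ((S1 ∪ S4).sup' h fun i => -d i) (Set.Ioi ((S1 ∪ S4).sup' h fun i => -d i))
  else Filter.atBot

/-- The filter of approach to the right endpoint `𝓡` of `I` from the left:
`𝓝[<] 𝓡` if `𝓡 = min_{i ∈ S2 ∪ S3} d i` is finite, and `atTop` if `𝓡 = +∞`. -/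
noncomputable def rightFilter {s : ℕ} (S2 S3 : Finset (Fin s)) (d : Fin s → ℝ) : Filter ℝ :=
  if h : (S2 ∪ S3).Nonempty then
    nhdsWithin ((S2 ∪ S3).inf' h d) (Set.Iio ((S2 ∪ S3).inf' h d))
  else Filter.atTop

lemma memI_isOpen {s : ℕ} (S1 S2 S3 S4 : Finset (Fin s)) (d : Fin s → ℝ) :
    IsOpen {z : ℝ | memI S1 S2 S3 S4 d z} := by
  have h : {z : ℝ | memI S1 S2 S3 S4 d z} =
      (⋂ i ∈ (S1 ∪ S4), Set.Ioi (-d i)) ∩ ⋂ i ∈ (S2 ∪ S3), Set.Iio (d i) := by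
    ext z
    simp [memI, Set.mem_iInter]
  rw [h]
  exact (isOpen_biInter_finset fun i _ => isOpen_Ioi).inter
    (isOpen_biInter_finset fun i _ => isOpen_Iio)

lemma memI_ordConnected {s : ℕ} (S1 S2 S3 S4 : Finset (Fin s)) (d : Fin s → ℝ) :
    Set.OrdConnected {z : ℝ | memI S1 S2 S3 S4 d z} := by
  constructor
  intro x hx y hy z hz
  exact ⟨fun i hi => lt_of_lt_of_le (hx.1 i hi) hz.1,
    fun i hi => lt_of_le_of_lt hz.2 (hy.2 i hi)⟩

lemma gFun_hasDerivAt {s : ℕ} (S1 S2 S3 S4 : Finset (Fin s)) (a d : Fin s → ℝ) {z : ℝ}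
    (hz : memI S1 S2 S3 S4 d z) :
    HasDerivAt (gFun S1 S2 S3 S4 a d) (gDeriv S1 S2 S3 S4 a d z) z := by
  have hP : ∀ i ∈ S1 ∪ S4, z + d i ≠ 0 := fun i hi =>
    ne_of_gt (by have := hz.1 i hi; linarith)
  have hM : ∀ i ∈ S2 ∪ S3, d i - z ≠ 0 := fun i hi =>
    ne_of_gt (by have := hz.2 i hi; linarith)
  have h1 : ∀ T : Finset (Fin s), T ⊆ S1 ∪ S4 →
      HasDerivAt (fun w => ∑ i ∈ T, a i * Real.log (w + d i))
        (∑ i ∈ T, a i / (z + d i)) z := by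
    intro T hT
    apply HasDerivAt.fun_sum
    intro i hi
    have h := HasDerivAt.const_mul (a i)
      (((hasDerivAt_id' (x := z)).add_const (d i)).log (hP i (hT hi)))
    simpa [mul_one_div, div_eq_mul_inv] using h
  have h2 : ∀ T : Finset (Fin s), T ⊆ S2 ∪ S3 →
      HasDerivAt (fun w => ∑ i ∈ T, a i * Real.log (d i - w))
        (∑ i ∈ T, -(a i / (d i - z))) z := by
    intro T hT
    apply HasDerivAt.fun_sum
    intro i hi
    have h := HasDerivAt.const_mul (a i)
      ((HasDerivAt.const_sub (d i) (hasDerivAt_id' (x := z))).log (hM i (hT hi)))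
    simpa [neg_div, mul_neg, mul_one_div, div_eq_mul_inv] using h
  have h := (((h1 S1 Finset.subset_union_left).sub (h2 S2 Finset.subset_union_left)).add
      (h2 S3 Finset.subset_union_right)).sub (h1 S4 Finset.subset_union_right)
  have hD : gDeriv S1 S2 S3 S4 a d z =
      (((∑ i ∈ S1, a i / (z + d i)) - ∑ i ∈ S2, -(a i / (d i - z)))
        + ∑ i ∈ S3, -(a i / (d i - z))) - ∑ i ∈ S4, a i / (z + d i) := by
    simp only [gDeriv, Finset.sum_neg_distrib]
    ring
  rw [hD]
  exact h

lemma gDeriv_analyticAt {s : ℕ} (S1 S2 S3 S4 : Finset (Fin s)) (a d : Fin s → ℝ) {z : ℝ}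
    (hz : memI S1 S2 S3 S4 d z) :
    AnalyticAt ℝ (gDeriv S1 S2 S3 S4 a d) z := by
  have hP : ∀ i ∈ S1 ∪ S4, z + d i ≠ 0 := fun i hi =>
    ne_of_gt (by have := hz.1 i hi; linarith)
  have hM : ∀ i ∈ S2 ∪ S3, d i - z ≠ 0 := fun i hi =>
    ne_of_gt (by have := hz.2 i hi; linarith)
  have t1 : ∀ T : Finset (Fin s), T ⊆ S1 ∪ S4 →
      AnalyticAt ℝ (fun w : ℝ => ∑ i ∈ T, a i / (w + d i)) z := fun T hT =>
    T.analyticAt_fun_sum fun i hi =>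
      analyticAt_const.div (analyticAt_id.add analyticAt_const) (hP i (hT hi))
  have t2 : ∀ T : Finset (Fin s), T ⊆ S2 ∪ S3 →
      AnalyticAt ℝ (fun w : ℝ => ∑ i ∈ T, a i / (d i - w)) z := fun T hT =>
    T.analyticAt_fun_sum fun i hi =>
      analyticAt_const.div (analyticAt_const.sub analyticAt_id) (hM i (hT hi))
  exact (((t1 S1 Finset.subset_union_left).add (t2 S2 Finset.subset_union_left)).sub
    (t2 S3 Finset.subset_union_right)).sub (t1 S4 Finset.subset_union_right)

lemma slope_neg_of_lt {f : ℝ → ℝ} {x y : ℝ} (hxy : x < y) (h : slope f x y < 0) :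
    f y < f x := by
  rw [slope_def_field] at h
  rcases div_neg_iff.mp h with ⟨h1, h2⟩ | ⟨h1, h2⟩ <;> linarith

lemma slope_pos_of_lt {f : ℝ → ℝ} {x y : ℝ} (hxy : x < y) (h : 0 < slope f x y) :
    f x < f y := by
  rw [slope_def_field] at h
  rcases div_pos_iff.mp h with ⟨h1, h2⟩ | ⟨h1, h2⟩ <;> linarith

lemma slope_pos_of_gt {f : ℝ → ℝ} {x y : ℝ} (hxy : y < x) (h : 0 < slope f x y) :
    f y < f x := by
  rw [slope_def_field] at h
  rcases div_pos_iff.mp h with ⟨h1, h2⟩ | ⟨h1, h2⟩ <;> linarith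

lemma last_crossing {f : ℝ → ℝ} {u p K : ℝ} (hup : u ≤ p)
    (hc : ContinuousOn f (Set.Icc u p)) (hu : K < f u) (hp : f p < K) :
    ∃ x ∈ Set.Ico u p, f x = K ∧ ∀ z ∈ Set.Ioc x p, f z < K := by
  set A := Set.Icc u p ∩ f ⁻¹' {K} with hA
  have hAsub : A ⊆ Set.Icc u p := Set.inter_subset_left
  have hone : A.Nonempty := by
    obtain ⟨w, hw, hwK⟩ := intermediate_value_Icc' hup hc ⟨le_of_lt hp, le_of_lt hu⟩
    exact ⟨w, hw, by simpa using hwK⟩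
  have hclosed : IsClosed A :=
    hc.preimage_isClosed_of_isClosed isClosed_Icc isClosed_singleton
  have hcomp : IsCompact A := isCompact_Icc.of_isClosed_subset hclosed hAsub
  have hbdd : BddAbove A := ⟨p, fun y hy => (hAsub hy).2⟩
  set x := sSup A with hx
  have hxA : x ∈ A := hcomp.sSup_mem hone
  have hxK : f x = K := hxA.2
  have hxp : x < p := lt_of_le_of_ne (hxA.1).2 (fun h => by rw [h] at hxK; linarith)
  refine ⟨x, ⟨(hxA.1).1, hxp⟩, hxK, ?_⟩
  intro z hz
  by_contra hcon
  push_neg at hcon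
  have hzu : u ≤ z := le_trans (hxA.1).1 (le_of_lt hz.1)
  have hzK : f z ≠ K := by
    intro h
    have : z ≤ x := le_csSup hbdd ⟨⟨hzu, hz.2⟩, by simpa using h⟩
    linarith [hz.1]
  have hKz : K < f z := lt_of_le_of_ne hcon (Ne.symm hzK)
  obtain ⟨w, hw, hwK⟩ := intermediate_value_Icc' hz.2
    (hc.mono (Set.Icc_subset_Icc hzu le_rfl)) ⟨le_of_lt hp, le_of_lt hKz⟩
  have : w ≤ x := le_csSup hbdd ⟨⟨le_trans hzu hw.1, hw.2⟩, by simpa using hwK⟩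
  have : z ≤ x := le_trans hw.1 this
  linarith [hz.1]

lemma first_crossing {f : ℝ → ℝ} {q v K : ℝ} (hqv : q ≤ v)
    (hc : ContinuousOn f (Set.Icc q v)) (hq : K < f q) (hv : f v < K) :
    ∃ x ∈ Set.Ioc q v, f x = K ∧ ∀ z ∈ Set.Ico q x, K < f z := by
  have hmap : Set.MapsTo (fun t : ℝ => -t) (Set.Icc (-v) (-q)) (Set.Icc q v) :=
    fun t ht => ⟨show q ≤ -t by linarith [ht.2], show -t ≤ v by linarith [ht.1]⟩
  have hc' : ContinuousOn (fun t : ℝ => -f (-t)) (Set.Icc (-v) (-q)) :=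
    (hc.comp continuous_neg.continuousOn hmap).neg
  obtain ⟨x, hx, hxK, hlast⟩ := last_crossing (by linarith : -v ≤ -q) hc'
    (by rw [neg_neg]; linarith : -K < -f (-(-v)))
    (by rw [neg_neg]; linarith : -f (-(-q)) < -K)
  have hfx : f (-x) = K := by
    have h := hxK
    linarith
  refine ⟨-x, ⟨by linarith [hx.2], by linarith [hx.1]⟩, hfx, ?_⟩
  intro z hz
  have h2 := hlast (-z) ⟨by linarith [hz.2], by linarith [hz.1]⟩
  simp only [neg_neg] at h2
  linarith

lemma countable_zeros {f : ℝ → ℝ} {U : Set ℝ} (hUc : IsPreconnected U)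
    (hf : ∀ z ∈ U, AnalyticAt ℝ f z) {z0 : ℝ} (hz0 : z0 ∈ U) (hfz0 : f z0 ≠ 0) :
    {z | z ∈ U ∧ f z = 0}.Countable := by
  set Z := {z | z ∈ U ∧ f z = 0} with hZ
  have hdisc : DiscreteTopology Z := by
    rw [discreteTopology_subtype_iff]
    intro x hx
    rcases (hf x hx.1).eventually_eq_zero_or_eventually_ne_zero with hev | hev
    · exfalso
      have := AnalyticOnNhd.eqOn_zero_of_preconnected_of_eventuallyEq_zero
        (fun z hz => hf z hz) hUc hx.1 hev
      exact hfz0 (this hz0)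
    · rw [Filter.inf_principal_eq_bot]
      filter_upwards [hev] with w hw
      exact fun hwZ => hw hwZ.2
  exact (HereditarilyLindelof_LindelofSets Z).countable hdisc

lemma aux_left {s : ℕ} {S1 S2 S3 S4 : Finset (Fin s)} {d : Fin s → ℝ} {p : ℝ}
    (hp : memI S1 S2 S3 S4 d p) :
    (leftFilter S1 S4 d).NeBot ∧
      ∀ᶠ z in leftFilter S1 S4 d, memI S1 S2 S3 S4 d z ∧ z < p := by
  unfold leftFilter
  by_cases h : (S1 ∪ S4).Nonempty
  · rw [dif_pos h]
    have hLp : (S1 ∪ S4).sup' h (fun i => -d i) < p :=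
      (Finset.sup'_lt_iff h).mpr fun i hi => hp.1 i hi
    refine ⟨inferInstance, ?_⟩
    filter_upwards [eventually_mem_nhdsWithin,
      (eventually_lt_nhds hLp).filter_mono nhdsWithin_le_nhds] with z hz1 hz2
    exact ⟨⟨fun i hi => lt_of_le_of_lt (Finset.le_sup' (fun i => -d i) hi) hz1,
      fun i hi => hz2.trans (hp.2 i hi)⟩, hz2⟩
  · rw [dif_neg h]
    refine ⟨inferInstance, ?_⟩
    filter_upwards [Filter.eventually_lt_atBot p] with z hz
    exact ⟨⟨fun i hi => absurd ⟨i, hi⟩ h, fun i hi => hz.trans (hp.2 i hi)⟩, hz⟩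

lemma aux_right {s : ℕ} {S1 S2 S3 S4 : Finset (Fin s)} {d : Fin s → ℝ} {q : ℝ}
    (hq : memI S1 S2 S3 S4 d q) :
    (rightFilter S2 S3 d).NeBot ∧
      ∀ᶠ z in rightFilter S2 S3 d, memI S1 S2 S3 S4 d z ∧ q < z := by
  unfold rightFilter
  by_cases h : (S2 ∪ S3).Nonempty
  · rw [dif_pos h]
    have hqR : q < (S2 ∪ S3).inf' h d :=
      (Finset.lt_inf'_iff h).mpr fun i hi => hq.2 i hi
    refine ⟨inferInstance, ?_⟩
    filter_upwards [eventually_mem_nhdsWithin,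
      (eventually_gt_nhds hqR).filter_mono nhdsWithin_le_nhds] with z hz1 hz2
    exact ⟨⟨fun i hi => (hq.1 i hi).trans hz2, fun i hi =>
      lt_of_lt_of_le hz1 (Finset.inf'_le d hi)⟩, hz2⟩
  · rw [dif_neg h]
    refine ⟨inferInstance, ?_⟩
    filter_upwards [Filter.eventually_gt_atTop q] with z hz
    exact ⟨⟨fun i hi => (hq.1 i hi).trans hz, fun i hi => absurd ⟨i, hi⟩ h⟩, hz⟩

lemma forward_aux {s : ℕ} (S1 S2 S3 S4 : Finset (Fin s)) (a d : Fin s → ℝ)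
    {z₁ z₂ : ℝ} (h12 : z₁ < z₂)
    (hz₁ : memI S1 S2 S3 S4 d z₁) (hz₂ : memI S1 S2 S3 S4 d z₂)
    (hval : gFun S1 S2 S3 S4 a d z₁ = gFun S1 S2 S3 S4 a d z₂)
    (hd₁ : gDeriv S1 S2 S3 S4 a d z₁ < 0) :
    ∃ zt, memI S1 S2 S3 S4 d zt ∧ 0 < gDeriv S1 S2 S3 S4 a d zt := by
  have hIopen := memI_isOpen S1 S2 S3 S4 d
  have hord := memI_ordConnected S1 S2 S3 S4 d
  have hslope := hasDerivAt_iff_tendsto_slope.mp (gFun_hasDerivAt S1 S2 S3 S4 a d hz₁)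
  have hev1 : ∀ᶠ w in nhdsWithin z₁ {z₁}ᶜ, slope (gFun S1 S2 S3 S4 a d) z₁ w < 0 :=
    hslope.eventually_lt_const hd₁
  have hsub : Set.Ioi z₁ ⊆ {z₁}ᶜ := fun x hx => ne_of_gt hx
  have hev2 : ∀ᶠ w in nhdsWithin z₁ (Set.Ioi z₁), slope (gFun S1 S2 S3 S4 a d) z₁ w < 0 :=
    hev1.filter_mono (nhdsWithin_mono z₁ hsub)
  have hevI : ∀ᶠ w in nhdsWithin z₁ (Set.Ioi z₁), memI S1 S2 S3 S4 d w :=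
    nhdsWithin_le_nhds (hIopen.mem_nhds hz₁)
  have hevlt : ∀ᶠ w in nhdsWithin z₁ (Set.Ioi z₁), w < z₂ :=
    (eventually_lt_nhds h12).filter_mono nhdsWithin_le_nhds
  obtain ⟨x, hx1, hx2, hx3, hx4⟩ :=
    (eventually_mem_nhdsWithin.and (hev2.and (hevI.and hevlt))).exists
  have hgx : gFun S1 S2 S3 S4 a d x < gFun S1 S2 S3 S4 a d z₁ := slope_neg_of_lt hx1 hx2
  have hIcc : Set.Icc x z₂ ⊆ {z | memI S1 S2 S3 S4 d z} := hord.out hx3 hz₂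
  have hcont : ContinuousOn (gFun S1 S2 S3 S4 a d) (Set.Icc x z₂) := fun w hw =>
    ((gFun_hasDerivAt S1 S2 S3 S4 a d (hIcc hw)).continuousAt).continuousWithinAt
  have hderiv : ∀ w ∈ Set.Ioo x z₂,
      HasDerivAt (gFun S1 S2 S3 S4 a d) (gDeriv S1 S2 S3 S4 a d w) w := fun w hw =>
    gFun_hasDerivAt S1 S2 S3 S4 a d (hIcc (Set.Ioo_subset_Icc_self hw))
  obtain ⟨c, hc, hceq⟩ := exists_hasDerivAt_eq_slope (gFun S1 S2 S3 S4 a d)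
    (gDeriv S1 S2 S3 S4 a d) hx4 hcont hderiv
  refine ⟨c, hIcc (Set.Ioo_subset_Icc_self hc), ?_⟩
  rw [hceq]
  apply div_pos
  · rw [← hval]; linarith
  · linarith [hc.1, hc.2, hx4]

/-- Lemma 4.2(i): if `g → +∞` at `𝓛⁺`, `g → -∞` at `𝓡⁻`, and `g' → -∞` at both endpoints,
then there is a level `K` attained at two distinct points of `I` with negative derivative
iff `g'` is positive somewhere in `I`. -/
theorem lemma42_i
    {s : ℕ} (hs : 0 < s)
    (S1 S2 S3 S4 : Finset (Fin s))
    (h12 : Disjoint S1 S2) (h13 : Disjoint S1 S3) (h14 : Disjoint S1 S4)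
    (h23 : Disjoint S2 S3) (h24 : Disjoint S2 S4) (h34 : Disjoint S3 S4)
    (hcover : S1 ∪ S2 ∪ S3 ∪ S4 = Finset.univ)
    (a : Fin s → ℝ) (ha : ∀ i, 0 < a i)
    (d : Fin s → ℝ)
    (hIne : ∃ z : ℝ, memI S1 S2 S3 S4 d z)
    (hgL : Filter.Tendsto (gFun S1 S2 S3 S4 a d) (leftFilter S1 S4 d) Filter.atTop)
    (hgR : Filter.Tendsto (gFun S1 S2 S3 S4 a d) (rightFilter S2 S3 d) Filter.atBot)
    (hdL : Filter.Tendsto (gDeriv S1 S2 S3 S4 a d) (leftFilter S1 S4 d) Filter.atBot)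
    (hdR : Filter.Tendsto (gDeriv S1 S2 S3 S4 a d) (rightFilter S2 S3 d) Filter.atBot) :
    (∃ K z₁ z₂ : ℝ, z₁ ≠ z₂ ∧
        memI S1 S2 S3 S4 d z₁ ∧ memI S1 S2 S3 S4 d z₂ ∧
        gFun S1 S2 S3 S4 a d z₁ = K ∧ gFun S1 S2 S3 S4 a d z₂ = K ∧
        gDeriv S1 S2 S3 S4 a d z₁ < 0 ∧ gDeriv S1 S2 S3 S4 a d z₂ < 0) ↔
      ∃ zt : ℝ, memI S1 S2 S3 S4 d zt ∧ 0 < gDeriv S1 S2 S3 S4 a d zt := by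
  classical
  have hIopen := memI_isOpen S1 S2 S3 S4 d
  have hord := memI_ordConnected S1 S2 S3 S4 d
  constructor
  · rintro ⟨K, z₁, z₂, hne, hz₁, hz₂, hg₁, hg₂, hd₁, hd₂⟩
    rcases hne.lt_or_gt with h | h
    · exact forward_aux S1 S2 S3 S4 a d h hz₁ hz₂ (hg₁.trans hg₂.symm) hd₁
    · exact forward_aux S1 S2 S3 S4 a d h hz₂ hz₁ (hg₂.trans hg₁.symm) hd₂
  · rintro ⟨zt, hzt, hdzt⟩
    have hslope := hasDerivAt_iff_tendsto_slope.mp (gFun_hasDerivAt S1 S2 S3 S4 a d hzt)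
    have hev1 : ∀ᶠ w in nhdsWithin zt {zt}ᶜ, 0 < slope (gFun S1 S2 S3 S4 a d) zt w :=
      hslope.eventually_const_lt hdzt
    -- pick p < zt
    have hsubL : Set.Iio zt ⊆ {zt}ᶜ := fun x hx => ne_of_lt hx
    have hevIL : ∀ᶠ w in nhdsWithin zt (Set.Iio zt), memI S1 S2 S3 S4 d w :=
      nhdsWithin_le_nhds (hIopen.mem_nhds hzt)
    obtain ⟨p, hp1, hp2, hp3⟩ := (eventually_mem_nhdsWithin.and
      ((hev1.filter_mono (nhdsWithin_mono zt hsubL)).and hevIL)).exists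
    have hgp : gFun S1 S2 S3 S4 a d p < gFun S1 S2 S3 S4 a d zt := slope_pos_of_gt hp1 hp2
    -- pick q > zt
    have hsubR : Set.Ioi zt ⊆ {zt}ᶜ := fun x hx => ne_of_gt hx
    have hevIR : ∀ᶠ w in nhdsWithin zt (Set.Ioi zt), memI S1 S2 S3 S4 d w :=
      nhdsWithin_le_nhds (hIopen.mem_nhds hzt)
    obtain ⟨q, hq1, hq2, hq3⟩ := (eventually_mem_nhdsWithin.and
      ((hev1.filter_mono (nhdsWithin_mono zt hsubR)).and hevIR)).exists
    have hgq : gFun S1 S2 S3 S4 a d zt < gFun S1 S2 S3 S4 a d q := slope_pos_of_lt hq1 hq2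
    -- pick u
    obtain ⟨hnbL, hevL⟩ := aux_left hp3
    obtain ⟨u, ⟨huI, hup⟩, hugt⟩ :=
      (hevL.and (hgL.eventually_gt_atTop (gFun S1 S2 S3 S4 a d q))).exists
    -- pick v
    obtain ⟨hnbR, hevR⟩ := aux_right hq3
    obtain ⟨v, ⟨hvI, hqv⟩, hvlt⟩ :=
      (hevR.and (hgR.eventually_lt_atBot (gFun S1 S2 S3 S4 a d p))).exists
    -- critical values are countable
    have hZc : {z | z ∈ {z | memI S1 S2 S3 S4 d z} ∧ gDeriv S1 S2 S3 S4 a d z = 0}.Countable :=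
      countable_zeros hord.isPreconnected (fun z hz => gDeriv_analyticAt S1 S2 S3 S4 a d hz)
        hzt (ne_of_gt hdzt)
    have hKc : ((gFun S1 S2 S3 S4 a d) ''
        {z | z ∈ {z | memI S1 S2 S3 S4 d z} ∧ gDeriv S1 S2 S3 S4 a d z = 0}).Countable :=
      hZc.image _
    have hgpq : gFun S1 S2 S3 S4 a d p < gFun S1 S2 S3 S4 a d q := hgp.trans hgq
    obtain ⟨K, hKIoo, hKim⟩ : ∃ K ∈ Set.Ioo (gFun S1 S2 S3 S4 a d p) (gFun S1 S2 S3 S4 a d q),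
        K ∉ (gFun S1 S2 S3 S4 a d) ''
          {z | z ∈ {z | memI S1 S2 S3 S4 d z} ∧ gDeriv S1 S2 S3 S4 a d z = 0} := by
      by_contra hcon
      push_neg at hcon
      have hsub : Set.Ioo (gFun S1 S2 S3 S4 a d p) (gFun S1 S2 S3 S4 a d q) ⊆
          (gFun S1 S2 S3 S4 a d) ''
          {z | z ∈ {z | memI S1 S2 S3 S4 d z} ∧ gDeriv S1 S2 S3 S4 a d z = 0} :=
        fun K hK => hcon K hK
      have h0 := MeasureTheory.measure_mono_null hsub (hKc.measure_zero MeasureTheory.volume)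
      rw [Real.volume_Ioo] at h0
      rw [ENNReal.ofReal_eq_zero] at h0
      linarith
    -- crossing on the left
    have hIccup : Set.Icc u p ⊆ {z | memI S1 S2 S3 S4 d z} := hord.out huI hp3
    have hcup : ContinuousOn (gFun S1 S2 S3 S4 a d) (Set.Icc u p) := fun w hw =>
      ((gFun_hasDerivAt S1 S2 S3 S4 a d (hIccup hw)).continuousAt).continuousWithinAt
    obtain ⟨x₁, hx₁, hgx₁, hlast⟩ := last_crossing (le_of_lt hup) hcup
      (lt_trans hKIoo.2 hugt) hKIoo.1
    have hx₁I : memI S1 S2 S3 S4 d x₁ := hIccup ⟨hx₁.1, le_of_lt hx₁.2⟩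
    -- crossing on the right
    have hIccqv : Set.Icc q v ⊆ {z | memI S1 S2 S3 S4 d z} := hord.out hq3 hvI
    have hcqv : ContinuousOn (gFun S1 S2 S3 S4 a d) (Set.Icc q v) := fun w hw =>
      ((gFun_hasDerivAt S1 S2 S3 S4 a d (hIccqv hw)).continuousAt).continuousWithinAt
    obtain ⟨x₂, hx₂, hgx₂, hfirst⟩ := first_crossing (le_of_lt hqv) hcqv
      hKIoo.2 (lt_trans hvlt hKIoo.1)
    have hx₂I : memI S1 S2 S3 S4 d x₂ := hIccqv ⟨le_of_lt hx₂.1, hx₂.2⟩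
    -- derivative at x₁ is negative
    have hder₁ : gDeriv S1 S2 S3 S4 a d x₁ ≤ 0 := by
      have hten : Filter.Tendsto (slope (gFun S1 S2 S3 S4 a d) x₁)
          (nhdsWithin x₁ (Set.Ioi x₁)) (nhds (gDeriv S1 S2 S3 S4 a d x₁)) :=
        (hasDerivAt_iff_tendsto_slope.mp (gFun_hasDerivAt S1 S2 S3 S4 a d hx₁I)).mono_left
          (nhdsWithin_mono x₁ (fun x hx => ne_of_gt hx))
      refine le_of_tendsto hten ?_
      filter_upwards [eventually_mem_nhdsWithin,
        (eventually_lt_nhds hx₁.2).filter_mono nhdsWithin_le_nhds] with w hw1 hw2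
      have hwlt : gFun S1 S2 S3 S4 a d w < K := hlast w ⟨hw1, le_of_lt hw2⟩
      rw [slope_def_field]
      apply le_of_lt
      apply div_neg_of_neg_of_pos
      · rw [hgx₁]; linarith
      · exact sub_pos.mpr hw1
    have hne₁ : gDeriv S1 S2 S3 S4 a d x₁ ≠ 0 := by
      intro h0
      exact hKim ⟨x₁, ⟨hx₁I, h0⟩, hgx₁⟩
    -- derivative at x₂ is negative
    have hder₂ : gDeriv S1 S2 S3 S4 a d x₂ ≤ 0 := by
      have hten : Filter.Tendsto (slope (gFun S1 S2 S3 S4 a d) x₂)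
          (nhdsWithin x₂ (Set.Iio x₂)) (nhds (gDeriv S1 S2 S3 S4 a d x₂)) :=
        (hasDerivAt_iff_tendsto_slope.mp (gFun_hasDerivAt S1 S2 S3 S4 a d hx₂I)).mono_left
          (nhdsWithin_mono x₂ (fun x hx => ne_of_lt hx))
      refine le_of_tendsto hten ?_
      filter_upwards [eventually_mem_nhdsWithin,
        (eventually_gt_nhds hx₂.1).filter_mono nhdsWithin_le_nhds] with w hw1 hw2
      have hwgt : K < gFun S1 S2 S3 S4 a d w := hfirst w ⟨le_of_lt hw2, hw1⟩
      rw [slope_def_field]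
      apply le_of_lt
      apply div_neg_of_pos_of_neg
      · rw [hgx₂]; linarith
      · exact sub_neg.mpr hw1
    have hne₂ : gDeriv S1 S2 S3 S4 a d x₂ ≠ 0 := by
      intro h0
      exact hKim ⟨x₂, ⟨hx₂I, h0⟩, hgx₂⟩
    refine ⟨K, x₁, x₂, ?_, hx₁I, hx₂I, hgx₁, hgx₂,
      lt_of_le_of_ne hder₁ hne₁, lt_of_le_of_ne hder₂ hne₂⟩
    have : x₁ < x₂ := by
      calc x₁ < p := hx₁.2
        _ < zt := hp1
        _ < q := hq1
        _ < x₂ := hx₂.1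
    exact ne_of_lt this
end

section
/- Fix real numbers d₁,…,d_s and suppose the interval I = (𝓛, 𝓡) is non-empty. Suppose lim_{z→𝓛⁺} g(z) = −∞, lim_{z→𝓡⁻} g(z) = +∞, lim_{z→𝓛⁺} g′(z) = +∞, and lim_{z→𝓡⁻} g′(z) = +∞. If there exists K ∈ ℝ such that the equation g(z) = K has at least two distinct solutions z₁, z₂ ∈ I with g′(z₁) < 0 and g′(z₂) < 0, then there exist points z̃₁, z̃₂, z̃₃ ∈ I with z̃₁ < z̃₂ < z̃₃, g′(z̃₁) < 0, g′(z̃₂) > 0 and g′(z̃₃) < 0. (This is Lemma 4.2(iii).) -/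
open Finset

lemma memI_of_mem {s : ℕ} {S1 S2 S3 S4 : Finset (Fin s)} {d : Fin s → ℝ} {z₁ z₂ z : ℝ}
    (h1 : memI S1 S2 S3 S4 d z₁) (h2 : memI S1 S2 S3 S4 d z₂)
    (hl : z₁ ≤ z) (hr : z ≤ z₂) : memI S1 S2 S3 S4 d z :=
  ⟨fun i hi => lt_of_lt_of_le (h1.1 i hi) hl, fun i hi => lt_of_le_of_lt hr (h2.2 i hi)⟩

lemma hasDerivAt_gFun {s : ℕ} (S1 S2 S3 S4 : Finset (Fin s)) (a d : Fin s → ℝ) {z : ℝ}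
    (hm : memI S1 S2 S3 S4 d z) :
    HasDerivAt (gFun S1 S2 S3 S4 a d) (gDeriv S1 S2 S3 S4 a d z) z := by
  have hP : ∀ i ∈ S1 ∪ S4, HasDerivAt (fun x => a i * Real.log (x + d i)) (a i / (z + d i)) z := by
    intro i hi
    have hne : z + d i ≠ 0 := by have := hm.1 i hi; intro h; linarith
    have h := ((Real.hasDerivAt_log hne).comp z ((hasDerivAt_id z).add_const (d i))).const_mul (a i)
    simpa [div_eq_mul_inv, mul_comm] using h
  have hQ : ∀ i ∈ S2 ∪ S3, HasDerivAt (fun x => a i * Real.log (d i - x)) (-(a i / (d i - z))) z := by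
    intro i hi
    have hne : d i - z ≠ 0 := by have := hm.2 i hi; intro h; linarith
    have h := ((Real.hasDerivAt_log hne).comp z ((hasDerivAt_id z).const_sub (d i))).const_mul (a i)
    have heq : a i * ((d i - z)⁻¹ * (-1)) = -(a i / (d i - z)) := by field_simp
    simpa [heq, div_eq_mul_inv] using h
  have H1 : HasDerivAt (fun x => ∑ i ∈ S1, a i * Real.log (x + d i))
      (∑ i ∈ S1, a i / (z + d i)) z :=
    HasDerivAt.fun_sum (fun i hi => hP i (mem_union_left _ hi))
  have H4 : HasDerivAt (fun x => ∑ i ∈ S4, a i * Real.log (x + d i))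
      (∑ i ∈ S4, a i / (z + d i)) z :=
    HasDerivAt.fun_sum (fun i hi => hP i (mem_union_right _ hi))
  have H2 : HasDerivAt (fun x => ∑ i ∈ S2, a i * Real.log (d i - x))
      (∑ i ∈ S2, -(a i / (d i - z))) z :=
    HasDerivAt.fun_sum (fun i hi => hQ i (mem_union_left _ hi))
  have H3 : HasDerivAt (fun x => ∑ i ∈ S3, a i * Real.log (d i - x))
      (∑ i ∈ S3, -(a i / (d i - z))) z :=
    HasDerivAt.fun_sum (fun i hi => hQ i (mem_union_right _ hi))
  have H := ((H1.sub H2).add H3).sub H4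
  have heq : (∑ i ∈ S1, a i / (z + d i) - ∑ i ∈ S2, -(a i / (d i - z))
      + ∑ i ∈ S3, -(a i / (d i - z))) - ∑ i ∈ S4, a i / (z + d i)
      = gDeriv S1 S2 S3 S4 a d z := by
    simp only [gDeriv, Finset.sum_neg_distrib]; ring
  rw [heq] at H
  exact H

/-- Lemma 4.2(iii): if `g → -∞` at `𝓛⁺`, `g → +∞` at `𝓡⁻`, and `g' → +∞` at both endpoints,
and if there is a level `K` attained at two distinct points of `I` with negative derivative,
then there are `z̃₁ < z̃₂ < z̃₃` in `I` with `g'(z̃₁) < 0`, `g'(z̃₂) > 0` and `g'(z̃₃) < 0`. -/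
theorem lemma42_iii
    {s : ℕ} (hs : 0 < s)
    (S1 S2 S3 S4 : Finset (Fin s))
    (h12 : Disjoint S1 S2) (h13 : Disjoint S1 S3) (h14 : Disjoint S1 S4)
    (h23 : Disjoint S2 S3) (h24 : Disjoint S2 S4) (h34 : Disjoint S3 S4)
    (hcover : S1 ∪ S2 ∪ S3 ∪ S4 = Finset.univ)
    (a : Fin s → ℝ) (ha : ∀ i, 0 < a i)
    (d : Fin s → ℝ)
    (hIne : ∃ z : ℝ, memI S1 S2 S3 S4 d z)
    (hgL : Filter.Tendsto (gFun S1 S2 S3 S4 a d) (leftFilter S1 S4 d) Filter.atBot)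
    (hgR : Filter.Tendsto (gFun S1 S2 S3 S4 a d) (rightFilter S2 S3 d) Filter.atTop)
    (hdL : Filter.Tendsto (gDeriv S1 S2 S3 S4 a d) (leftFilter S1 S4 d) Filter.atTop)
    (hdR : Filter.Tendsto (gDeriv S1 S2 S3 S4 a d) (rightFilter S2 S3 d) Filter.atTop)
    (hK : ∃ K z₁ z₂ : ℝ, z₁ ≠ z₂ ∧
        memI S1 S2 S3 S4 d z₁ ∧ memI S1 S2 S3 S4 d z₂ ∧
        gFun S1 S2 S3 S4 a d z₁ = K ∧ gFun S1 S2 S3 S4 a d z₂ = K ∧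
        gDeriv S1 S2 S3 S4 a d z₁ < 0 ∧ gDeriv S1 S2 S3 S4 a d z₂ < 0) :
    ∃ zt₁ zt₂ zt₃ : ℝ, zt₁ < zt₂ ∧ zt₂ < zt₃ ∧
      memI S1 S2 S3 S4 d zt₁ ∧ memI S1 S2 S3 S4 d zt₂ ∧ memI S1 S2 S3 S4 d zt₃ ∧
      gDeriv S1 S2 S3 S4 a d zt₁ < 0 ∧ 0 < gDeriv S1 S2 S3 S4 a d zt₂ ∧
      gDeriv S1 S2 S3 S4 a d zt₃ < 0 := by
  obtain ⟨K, w₁, w₂, hne, hw1, hw2, hgw1, hgw2, hdw1, hdw2⟩ := hK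
  obtain ⟨z₁, z₂, hlt, hm1, hm2, hg1, hg2, hd1, hd2⟩ :
      ∃ z₁ z₂ : ℝ, z₁ < z₂ ∧ memI S1 S2 S3 S4 d z₁ ∧ memI S1 S2 S3 S4 d z₂ ∧
        gFun S1 S2 S3 S4 a d z₁ = K ∧ gFun S1 S2 S3 S4 a d z₂ = K ∧
        gDeriv S1 S2 S3 S4 a d z₁ < 0 ∧ gDeriv S1 S2 S3 S4 a d z₂ < 0 := by
    rcases lt_or_gt_of_ne hne with h | h
    · exact ⟨w₁, w₂, h, hw1, hw2, hgw1, hgw2, hdw1, hdw2⟩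
    · exact ⟨w₂, w₁, h, hw2, hw1, hgw2, hgw1, hdw2, hdw1⟩
  set g := gFun S1 S2 S3 S4 a d with hgdef
  set g' := gDeriv S1 S2 S3 S4 a d with hg'def
  -- near z₁ from the right, g < K
  have hslope1 : Filter.Tendsto (slope g z₁) (nhdsWithin z₁ {z₁}ᶜ) (nhds (g' z₁)) :=
    hasDerivAt_iff_tendsto_slope.mp (hasDerivAt_gFun S1 S2 S3 S4 a d hm1)
  have hE1 : ∀ᶠ x in nhdsWithin z₁ (Set.Ioi z₁), g x < K := by
    have h2 : ∀ᶠ x in nhdsWithin z₁ (Set.Ioi z₁), slope g z₁ x < 0 :=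
      (hslope1.eventually (gt_mem_nhds hd1)).filter_mono
        (nhdsWithin_mono _ (fun x hx => ne_of_gt hx))
    filter_upwards [h2, self_mem_nhdsWithin] with x hx hx'
    have hxz : (0:ℝ) < x - z₁ := sub_pos.mpr hx'
    rw [slope_def_field, div_neg_iff] at hx
    rcases hx with ⟨_, h⟩ | ⟨h, _⟩
    · linarith
    · linarith [hg1, h]
  -- near z₂ from the left, g > K
  have hslope2 : Filter.Tendsto (slope g z₂) (nhdsWithin z₂ {z₂}ᶜ) (nhds (g' z₂)) :=
    hasDerivAt_iff_tendsto_slope.mp (hasDerivAt_gFun S1 S2 S3 S4 a d hm2)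
  have hE2 : ∀ᶠ x in nhdsWithin z₂ (Set.Iio z₂), K < g x := by
    have h2 : ∀ᶠ x in nhdsWithin z₂ (Set.Iio z₂), slope g z₂ x < 0 :=
      (hslope2.eventually (gt_mem_nhds hd2)).filter_mono
        (nhdsWithin_mono _ (fun x hx => ne_of_lt hx))
    filter_upwards [h2, self_mem_nhdsWithin] with x hx hx'
    have hxz : x - z₂ < 0 := sub_neg.mpr hx'
    rw [slope_def_field, div_neg_iff] at hx
    rcases hx with ⟨h, _⟩ | ⟨_, h⟩
    · linarith [hg2, h]
    · linarith
  -- pick u ∈ (z₁, z₂) with g u < K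
  have hin1 : ∀ᶠ x in nhdsWithin z₁ (Set.Ioi z₁), x ∈ Set.Ioo z₁ z₂ :=
    Filter.eventually_mem_set.mpr (Ioo_mem_nhdsGT_of_mem (Set.mem_Ico.mpr ⟨le_refl z₁, hlt⟩))
  obtain ⟨u, hu, hum⟩ := (hE1.and hin1).exists
  -- pick v ∈ (u, z₂) with g v > K
  have hin2 : ∀ᶠ x in nhdsWithin z₂ (Set.Iio z₂), x ∈ Set.Ioo u z₂ :=
    Filter.eventually_mem_set.mpr (Ioo_mem_nhdsLT_of_mem (Set.mem_Ioc.mpr ⟨hum.2, le_refl z₂⟩))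
  obtain ⟨v, hv, hvm⟩ := (hE2.and hin2).exists
  have huv : u < v := hvm.1
  -- MVT on [u, v]
  have hmem : ∀ x ∈ Set.Icc u v, memI S1 S2 S3 S4 d x := fun x hx =>
    memI_of_mem hm1 hm2 (le_of_lt (lt_of_lt_of_le hum.1 hx.1)) (le_of_lt (lt_of_le_of_lt hx.2 hvm.2))
  have hcont : ContinuousOn g (Set.Icc u v) := fun x hx =>
    ((hasDerivAt_gFun S1 S2 S3 S4 a d (hmem x hx)).continuousAt).continuousWithinAt
  have hderiv : ∀ x ∈ Set.Ioo u v, HasDerivAt g (g' x) x := fun x hx =>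
    hasDerivAt_gFun S1 S2 S3 S4 a d (hmem x (Set.mem_Icc_of_Ioo hx))
  obtain ⟨c, hc, hc'⟩ := exists_hasDerivAt_eq_slope g g' huv hcont hderiv
  refine ⟨z₁, c, z₂, lt_of_lt_of_le hum.1 (le_of_lt hc.1), lt_of_le_of_lt (le_of_lt hc.2) hvm.2,
    hm1, hmem c (Set.mem_Icc_of_Ioo hc), hm2, hd1, ?_, hd2⟩
  rw [hc']
  have : g u < g v := lt_trans hu hv
  exact div_pos (by linarith) (by linarith)
end

section
/- Let β₁, β₂, e₁, e₂, x₁, x₂, x₃ be real numbers satisfying β₁ > 0, β₂ > 0, x_i + e_j > 0 for all i ∈ {1,2,3} and j ∈ {1,2}, and e₁ ≠ e₂. Then there exist real numbers a, b, c such that β₁/(x_i+e₁) + β₂/(x_i+e₂) = a + c/(x_i+b) for i = 1, 2, 3, where a > 0, b > min{e₁, e₂}, and min{β₁, β₂} < c < β₁ + β₂. (This is Lemma 4.3.) -/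
set_option maxHeartbeats 4000000

/-- Key construction for the case `e₁ < e₂`. -/
lemma lemma43_key (β₁ β₂ e₁ e₂ x₁ x₂ x₃ : ℝ)
    (hβ₁ : 0 < β₁) (hβ₂ : 0 < β₂)
    (h1 : 0 < x₁ + e₁) (h2 : 0 < x₂ + e₁) (h3 : 0 < x₃ + e₁)
    (h1' : 0 < x₁ + e₂) (h2' : 0 < x₂ + e₂) (h3' : 0 < x₃ + e₂)
    (he : e₁ < e₂) :
    ∃ a b c : ℝ, 0 < a ∧ e₁ < b ∧ β₁ < c ∧ c < β₁ + β₂ ∧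
      ∀ x ∈ ({x₁, x₂, x₃} : Set ℝ),
        β₁ / (x + e₁) + β₂ / (x + e₂) = a + c / (x + b) := by
  have hd : 0 < e₂ - e₁ := sub_pos.2 he
  obtain ⟨P₁, hP₁d⟩ : ∃ t : ℝ, t = (x₁ + e₁) * ((x₂ + e₁) * (x₃ + e₁)) := ⟨_, rfl⟩
  obtain ⟨P₂, hP₂d⟩ : ∃ t : ℝ, t = (x₁ + e₂) * ((x₂ + e₂) * (x₃ + e₂)) := ⟨_, rfl⟩
  have hP₁ : 0 < P₁ := hP₁d ▸ mul_pos h1 (mul_pos h2 h3)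
  have hP₂ : 0 < P₂ := hP₂d ▸ mul_pos h1' (mul_pos h2' h3')
  obtain ⟨E, hEd⟩ : ∃ t : ℝ, t = β₂ * P₁ + β₁ * P₂ := ⟨_, rfl⟩
  have hE : 0 < E := hEd ▸ add_pos (mul_pos hβ₂ hP₁) (mul_pos hβ₁ hP₂)
  have hE0 : E ≠ 0 := ne_of_gt hE
  obtain ⟨S, hSd⟩ : ∃ t : ℝ, t = β₂ * P₁ * (x₁ + x₂ + x₃ + e₁ + 2 * e₂)
      + β₁ * P₂ * (x₁ + x₂ + x₃ + 2 * e₁ + e₂) := ⟨_, rfl⟩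
  have hS : 0 < S := by
    rw [hSd]
    apply add_pos
    · apply mul_pos (mul_pos hβ₂ hP₁); linarith
    · apply mul_pos (mul_pos hβ₁ hP₂); linarith
  -- the key positive quantity
  have hQ : E ^ 2 - β₁ * (e₂ - e₁) ^ 2 * S
      = β₂ ^ 2 * P₁ ^ 2
        + β₁ * β₂ * P₁ * (2 * ((x₁ + e₁) * ((x₂ + e₁) * (x₃ + e₁)))
            + 2 * (e₂ - e₁) * ((x₁ + e₁) * (x₂ + e₁) + (x₁ + e₁) * (x₃ + e₁)
              + (x₂ + e₁) * (x₃ + e₁))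
            + (e₂ - e₁) ^ 2 * ((x₁ + e₁) + (x₂ + e₁) + (x₃ + e₁)))
        + β₁ ^ 2 * P₂ * ((x₁ + e₁) * ((x₂ + e₁) * (x₃ + e₁))
            + (e₂ - e₁) * ((x₁ + e₁) * (x₂ + e₁) + (x₁ + e₁) * (x₃ + e₁)
              + (x₂ + e₁) * (x₃ + e₁))) := by
    rw [hSd, hEd, hP₁d, hP₂d]; ring
  have hQpos : 0 < E ^ 2 - β₁ * (e₂ - e₁) ^ 2 * S := by
    rw [hQ]
    have t1 : 0 < β₂ ^ 2 * P₁ ^ 2 := mul_pos (pow_pos hβ₂ 2) (pow_pos hP₁ 2)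
    have t2 : 0 < β₁ * β₂ * P₁ * (2 * ((x₁ + e₁) * ((x₂ + e₁) * (x₃ + e₁)))
            + 2 * (e₂ - e₁) * ((x₁ + e₁) * (x₂ + e₁) + (x₁ + e₁) * (x₃ + e₁)
              + (x₂ + e₁) * (x₃ + e₁))
            + (e₂ - e₁) ^ 2 * ((x₁ + e₁) + (x₂ + e₁) + (x₃ + e₁))) := by
      apply mul_pos (mul_pos (mul_pos hβ₁ hβ₂) hP₁)
      have p123 : 0 < (x₁ + e₁) * ((x₂ + e₁) * (x₃ + e₁)) := mul_pos h1 (mul_pos h2 h3)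
      have p12 : 0 < (x₁ + e₁) * (x₂ + e₁) := mul_pos h1 h2
      have p13 : 0 < (x₁ + e₁) * (x₃ + e₁) := mul_pos h1 h3
      have p23 : 0 < (x₂ + e₁) * (x₃ + e₁) := mul_pos h2 h3
      have cB : 0 < 2 * (e₂ - e₁) * ((x₁ + e₁) * (x₂ + e₁) + (x₁ + e₁) * (x₃ + e₁)
          + (x₂ + e₁) * (x₃ + e₁)) :=
        mul_pos (by linarith) (by linarith)
      have cC : 0 < (e₂ - e₁) ^ 2 * ((x₁ + e₁) + (x₂ + e₁) + (x₃ + e₁)) :=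
        mul_pos (pow_pos hd 2) (by linarith)
      linarith
    have t3 : 0 < β₁ ^ 2 * P₂ * ((x₁ + e₁) * ((x₂ + e₁) * (x₃ + e₁))
            + (e₂ - e₁) * ((x₁ + e₁) * (x₂ + e₁) + (x₁ + e₁) * (x₃ + e₁)
              + (x₂ + e₁) * (x₃ + e₁))) := by
      apply mul_pos (mul_pos (pow_pos hβ₁ 2) hP₂)
      have p123 : 0 < (x₁ + e₁) * ((x₂ + e₁) * (x₃ + e₁)) := mul_pos h1 (mul_pos h2 h3)
      have p12 : 0 < (x₁ + e₁) * (x₂ + e₁) := mul_pos h1 h2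
      have p13 : 0 < (x₁ + e₁) * (x₃ + e₁) := mul_pos h1 h3
      have p23 : 0 < (x₂ + e₁) * (x₃ + e₁) := mul_pos h2 h3
      have cB : 0 < (e₂ - e₁) * ((x₁ + e₁) * (x₂ + e₁) + (x₁ + e₁) * (x₃ + e₁)
          + (x₂ + e₁) * (x₃ + e₁)) := mul_pos hd (by linarith)
      linarith
    linarith
  refine ⟨β₁ * β₂ * (e₂ - e₁) ^ 2 / E,
    (β₂ * e₂ * P₁ + β₁ * e₁ * P₂) / E,
    β₁ + β₂ - β₁ * β₂ * (e₂ - e₁) ^ 2 * S / E ^ 2, ?_, ?_, ?_, ?_, ?_⟩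
  · exact div_pos (mul_pos (mul_pos hβ₁ hβ₂) (pow_pos hd 2)) hE
  · rw [lt_div_iff₀ hE]
    have : 0 < β₂ * (e₂ - e₁) * P₁ := mul_pos (mul_pos hβ₂ hd) hP₁
    rw [hEd]; nlinarith
  · have hTlt : β₁ * β₂ * (e₂ - e₁) ^ 2 * S / E ^ 2 < β₂ := by
      rw [div_lt_iff₀ (pow_pos hE 2)]
      nlinarith [mul_pos hβ₂ hQpos]
    linarith
  · have hTpos : 0 < β₁ * β₂ * (e₂ - e₁) ^ 2 * S / E ^ 2 :=
      div_pos (mul_pos (mul_pos (mul_pos hβ₁ hβ₂) (pow_pos hd 2)) hS) (pow_pos hE 2)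
    linarith
  · -- the functional equation
    have key : ∀ x R₁ R₂ : ℝ, 0 < x + e₁ → 0 < x + e₂ →
        P₁ = (x + e₁) * R₁ → P₂ = (x + e₂) * R₂ →
        (e₂ - e₁) * S = (e₂ - e₁) * (β₂ * (x + e₂) * P₁ + β₁ * (x + e₁) * P₂)
          - (R₁ - R₂) * E →
        β₁ / (x + e₁) + β₂ / (x + e₂)
          = β₁ * β₂ * (e₂ - e₁) ^ 2 / E
            + (β₁ + β₂ - β₁ * β₂ * (e₂ - e₁) ^ 2 * S / E ^ 2)
              / (x + (β₂ * e₂ * P₁ + β₁ * e₁ * P₂) / E) := by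
      intro x R₁ R₂ hx1 hx2 hP1x hP2x hRx
      have hu0 : x + e₁ ≠ 0 := ne_of_gt hx1
      have hv0 : x + e₂ ≠ 0 := ne_of_gt hx2
      have hWpos : 0 < β₂ * (x + e₂) * P₁ + β₁ * (x + e₁) * P₂ :=
        add_pos (mul_pos (mul_pos hβ₂ hx2) hP₁) (mul_pos (mul_pos hβ₁ hx1) hP₂)
      have hW0 : β₂ * (x + e₂) * P₁ + β₁ * (x + e₁) * P₂ ≠ 0 := ne_of_gt hWpos
      have hb' : x + (β₂ * e₂ * P₁ + β₁ * e₁ * P₂) / E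
          = (β₂ * (x + e₂) * P₁ + β₁ * (x + e₁) * P₂) / E := by
        field_simp
        rw [hEd]; ring
      have hc' : (β₁ + β₂ - β₁ * β₂ * (e₂ - e₁) ^ 2 * S / E ^ 2) * E
          = ((β₁ + β₂) * E ^ 2 - β₁ * β₂ * (e₂ - e₁) ^ 2 * S) / E := by
        field_simp
      rw [hb', div_div_eq_mul_div, hc', div_div]
      rw [div_add_div _ _ hu0 hv0, div_add_div _ _ hE0 (mul_ne_zero hE0 hW0)]
      rw [div_eq_div_iff (mul_ne_zero hu0 hv0) (mul_ne_zero hE0 (mul_ne_zero hE0 hW0))]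
      linear_combination (β₁ * β₂ * (e₂ - e₁) * E * (x + e₁) * (x + e₂)) * hRx
        - ((β₁ + β₂) * (x + e₁) * (x + e₂) * E ^ 2) * hEd
        + (β₁ * β₂ * (e₂ - e₁) * (x + e₂) * E ^ 2) * hP1x
        - (β₁ * β₂ * (e₂ - e₁) * (x + e₁) * E ^ 2) * hP2x
    rintro x (rfl | rfl | rfl)
    · exact key x ((x₂ + e₁) * (x₃ + e₁)) ((x₂ + e₂) * (x₃ + e₂)) h1 h1'
        (by rw [hP₁d]; try ring) (by rw [hP₂d]; try ring) (by rw [hSd, hEd]; try ring)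
    · exact key x ((x₁ + e₁) * (x₃ + e₁)) ((x₁ + e₂) * (x₃ + e₂)) h2 h2'
        (by rw [hP₁d]; try ring) (by rw [hP₂d]; try ring) (by rw [hSd, hEd]; try ring)
    · exact key x ((x₁ + e₁) * (x₂ + e₁)) ((x₁ + e₂) * (x₂ + e₂)) h3 h3'
        (by rw [hP₁d]; try ring) (by rw [hP₂d]; try ring) (by rw [hSd, hEd]; try ring)

/-- Lemma 4.3: for `β₁, β₂ > 0`, `x_i + e_j > 0` and `e₁ ≠ e₂`, there are `a, b, c` with
`a > 0`, `b > min{e₁, e₂}`, `min{β₁, β₂} < c < β₁ + β₂` such that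
`β₁/(x_i+e₁) + β₂/(x_i+e₂) = a + c/(x_i+b)` for `i = 1, 2, 3`. -/
theorem lemma43 (β₁ β₂ e₁ e₂ x₁ x₂ x₃ : ℝ)
    (hβ₁ : 0 < β₁) (hβ₂ : 0 < β₂)
    (hx : ∀ x ∈ ({x₁, x₂, x₃} : Set ℝ), 0 < x + e₁ ∧ 0 < x + e₂)
    (he : e₁ ≠ e₂) :
    ∃ a b c : ℝ, 0 < a ∧ min e₁ e₂ < b ∧ min β₁ β₂ < c ∧ c < β₁ + β₂ ∧
      ∀ x ∈ ({x₁, x₂, x₃} : Set ℝ),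
        β₁ / (x + e₁) + β₂ / (x + e₂) = a + c / (x + b) := by
  obtain ⟨h1, h1'⟩ := hx x₁ (by simp)
  obtain ⟨h2, h2'⟩ := hx x₂ (by simp)
  obtain ⟨h3, h3'⟩ := hx x₃ (by simp)
  rcases lt_or_gt_of_ne he with h | h
  · obtain ⟨a, b, c, ha, hb, hc1, hc2, heq⟩ :=
      lemma43_key β₁ β₂ e₁ e₂ x₁ x₂ x₃ hβ₁ hβ₂ h1 h2 h3 h1' h2' h3' h
    exact ⟨a, b, c, ha, lt_of_le_of_lt (min_le_left _ _) hb,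
      lt_of_le_of_lt (min_le_left _ _) hc1, hc2, heq⟩
  · obtain ⟨a, b, c, ha, hb, hc1, hc2, heq⟩ :=
      lemma43_key β₂ β₁ e₂ e₁ x₁ x₂ x₃ hβ₂ hβ₁ h1' h2' h3' h1 h2 h3 h
    refine ⟨a, b, c, ha, lt_of_le_of_lt (min_le_right _ _) hb,
      lt_of_le_of_lt (min_le_right _ _) hc1, by linarith, ?_⟩
    intro x hxm
    rw [add_comm (β₁ / (x + e₁))]
    exact heq x hxm
end

section
/- Let n ≥ 1, let d₁,…,d_n be real numbers and a₁,…,a_n be positive real numbers, and set M := min_{1≤i≤n} d_i and G(z) := Σ_{i=1}^n a_i/(z+d_i). Then for any three pairwise distinct real numbers z₁, z₂, z₃ with z_j > −M for j = 1, 2, 3, there exist real numbers A, D, θ such that G(z_j) = A/(z_j+D) + θ for j = 1, 2, 3, where min_{1≤i≤n} a_i ≤ A ≤ Σ_{i=1}^n a_i, D ≥ M, and θ ≥ 0. (This is Lemma 4.4.) -/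
section
variable (c c' x y z : ℝ)
lemma auxA1 (hx : x ≠ 0) (hy : y ≠ 0) (hz : z ≠ 0) : c / (x * y * z) * x = c / (y * z) := by
  rw [div_mul_eq_mul_div, div_eq_div_iff (by positivity) (by positivity)]; ring
lemma auxA2 (hx : x ≠ 0) (hy : y ≠ 0) (hz : z ≠ 0) : c / (x * y * z) * y = c / (x * z) := by
  rw [div_mul_eq_mul_div, div_eq_div_iff (by positivity) (by positivity)]; ring
lemma auxA3 (hx : x ≠ 0) (hy : y ≠ 0) (hz : z ≠ 0) : c / (x * y * z) * (x * y) = c / z := by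
  rw [div_mul_eq_mul_div, div_eq_div_iff (by positivity) (by positivity)]; ring
lemma auxA4 (hx : x ≠ 0) (hy : y ≠ 0) (hz : z ≠ 0) : c / (x * y * z) * z = c / (x * y) := by
  rw [div_mul_eq_mul_div, div_eq_div_iff (by positivity) (by positivity)]; ring
lemma auxA5 (hx : x ≠ 0) (hy : y ≠ 0) (hz : z ≠ 0) : c / (x * y * z) * (x * y * z) = c := by
  rw [div_mul_eq_mul_div, mul_div_assoc, div_self (by positivity), mul_one]
lemma auxA6 : c / y * (1 / x) = c / (x * y) := by
  rw [div_mul_div_comm, mul_one, mul_comm y x]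
lemma auxA7 : c / y * (1 / z) = c / (y * z) := by rw [div_mul_div_comm, mul_one]
lemma auxA8 : c / y * (1 / x * (1 / z)) = c / (x * y * z) := by
  rw [div_mul_div_comm, one_mul, div_mul_div_comm, mul_one, show y * (x * z) = x * y * z by ring]
lemma auxA9 : c / (x * y) * (1 / z) = c / (x * y * z) := by rw [div_mul_div_comm, mul_one]
lemma auxA10 : c / (x * y) * (1 / z * (1 / z)) = c / (x * y * z * z) := by
  rw [div_mul_div_comm, one_mul, div_mul_div_comm, mul_one, mul_assoc, mul_assoc, mul_assoc]
lemma auxA11 : c / (y * z) * (c' / (x * z)) = c * (c' / (x * y * z * z)) := by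
  rw [div_mul_div_comm, mul_div_assoc, show y * z * (x * z) = x * y * z * z by ring]
lemma auxA12 (hx : x ≠ 0) (hy : y ≠ 0) (hz : z ≠ 0) : c / (y * z) = x * (c / (x * y * z)) := by
  rw [show x * (c / (x * y * z)) = x * c / (x * y * z) from (mul_div_assoc x c _).symm,
    div_eq_div_iff (by positivity) (by positivity)]
  ring
lemma auxE1 (c x y : ℝ) (hx : x ≠ 0) (hy : y ≠ 0) : c / x - c / y = (y - x) * (c / (x * y)) := by
  rw [div_sub_div _ _ hx hy, mul_div_assoc', div_eq_div_iff (by positivity) (by positivity)]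
  ring
lemma auxE2 (c x y z : ℝ) (hx : x ≠ 0) (hy : y ≠ 0) (hz : z ≠ 0) :
    c / (x * z) - c / (y * z) = (y - x) * (c / (x * y * z)) := by
  rw [div_sub_div _ _ (by positivity : x * z ≠ 0) (by positivity : y * z ≠ 0), mul_div_assoc',
    div_eq_div_iff (by positivity) (by positivity)]
  ring
lemma auxE3 (c x y z : ℝ) (hx : x ≠ 0) (hy : y ≠ 0) (hz : z ≠ 0) :
    c / (x * y) - c / (x * z) = (z - y) * (c / (x * y * z)) := by
  rw [div_sub_div _ _ (by positivity : x * y ≠ 0) (by positivity : x * z ≠ 0), mul_div_assoc',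
    div_eq_div_iff (by positivity) (by positivity)]
  ring

end

theorem cheb44 {ι : Type*} (s : Finset ι) (μ f g : ι → ℝ) (hμ : ∀ i ∈ s, 0 ≤ μ i)
    (h : ∀ i ∈ s, ∀ j ∈ s, 0 ≤ (f i - f j) * (g i - g j)) :
    (∑ i ∈ s, μ i * f i) * (∑ i ∈ s, μ i * g i) ≤
      (∑ i ∈ s, μ i) * (∑ i ∈ s, μ i * (f i * g i)) := by
  have key : 0 ≤ ∑ i ∈ s, ∑ j ∈ s, μ i * μ j * ((f i - f j) * (g i - g j)) :=
    Finset.sum_nonneg fun i hi => Finset.sum_nonneg fun j hj =>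
      mul_nonneg (mul_nonneg (hμ i hi) (hμ j hj)) (h i hi j hj)
  have h1 : (∑ i ∈ s, μ i) * (∑ i ∈ s, μ i * (f i * g i))
      = ∑ i ∈ s, ∑ j ∈ s, μ i * (μ j * (f j * g j)) := Finset.sum_mul_sum _ _ _ _
  have h2 : (∑ i ∈ s, μ i) * (∑ i ∈ s, μ i * (f i * g i))
      = ∑ i ∈ s, ∑ j ∈ s, μ j * (μ i * (f i * g i)) := h1.trans Finset.sum_comm
  have h3 : (∑ i ∈ s, μ i * f i) * (∑ i ∈ s, μ i * g i)
      = ∑ i ∈ s, ∑ j ∈ s, (μ i * f i) * (μ j * g j) := Finset.sum_mul_sum _ _ _ _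
  have h4 : (∑ i ∈ s, μ i * f i) * (∑ i ∈ s, μ i * g i)
      = ∑ i ∈ s, ∑ j ∈ s, (μ j * f j) * (μ i * g i) :=
    (Finset.sum_mul_sum _ _ _ _).trans Finset.sum_comm
  have expand : ∑ i ∈ s, ∑ j ∈ s, μ i * μ j * ((f i - f j) * (g i - g j))
      = 2 * ((∑ i ∈ s, μ i) * (∑ i ∈ s, μ i * (f i * g i))
          - (∑ i ∈ s, μ i * f i) * (∑ i ∈ s, μ i * g i)) := by
    have : 2 * ((∑ i ∈ s, μ i) * (∑ i ∈ s, μ i * (f i * g i))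
          - (∑ i ∈ s, μ i * f i) * (∑ i ∈ s, μ i * g i))
        = ((∑ i ∈ s, μ i) * (∑ i ∈ s, μ i * (f i * g i))
            + (∑ i ∈ s, μ i) * (∑ i ∈ s, μ i * (f i * g i)))
          - ((∑ i ∈ s, μ i * f i) * (∑ i ∈ s, μ i * g i)
            + (∑ i ∈ s, μ i * f i) * (∑ i ∈ s, μ i * g i)) := by ring
    rw [this]
    nth_rewrite 2 [h4]
    rw [h3]
    nth_rewrite 1 [h1]
    nth_rewrite 1 [h2]
    rw [← Finset.sum_add_distrib, ← Finset.sum_add_distrib, ← Finset.sum_sub_distrib]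
    refine Finset.sum_congr rfl fun i _ => ?_
    rw [← Finset.sum_add_distrib, ← Finset.sum_add_distrib, ← Finset.sum_sub_distrib]
    exact Finset.sum_congr rfl fun j _ => by ring
  linarith [expand ▸ key]

/-- Lemma 4.4: for `G(z) = ∑ a_i/(z + d_i)` with all `a_i > 0`, `M = min d_i`, and any three
pairwise distinct points `z₁, z₂, z₃ > -M`, there are `A, D, θ` with
`min a_i ≤ A ≤ ∑ a_i`, `D ≥ M`, `θ ≥ 0` such that `G(z_j) = A/(z_j + D) + θ` for `j = 1,2,3`. -/
theorem lemma44 (n : ℕ) (hn : 0 < n) (d a : Fin n → ℝ) (ha : ∀ i, 0 < a i)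
    (z₁ z₂ z₃ : ℝ) (h12 : z₁ ≠ z₂) (h13 : z₁ ≠ z₃) (h23 : z₂ ≠ z₃)
    (hz : ∀ zj ∈ ({z₁, z₂, z₃} : Set ℝ),
      -(Finset.univ.inf' (Finset.univ_nonempty_iff.mpr ⟨⟨0, hn⟩⟩) d) < zj) :
    ∃ A D θ : ℝ,
      Finset.univ.inf' (Finset.univ_nonempty_iff.mpr ⟨⟨0, hn⟩⟩) a ≤ A ∧
      A ≤ ∑ i, a i ∧
      Finset.univ.inf' (Finset.univ_nonempty_iff.mpr ⟨⟨0, hn⟩⟩) d ≤ D ∧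
      0 ≤ θ ∧
      ∀ zj ∈ ({z₁, z₂, z₃} : Set ℝ), ∑ i, a i / (zj + d i) = A / (zj + D) + θ := by
  classical
  set M := Finset.univ.inf' (Finset.univ_nonempty_iff.mpr ⟨⟨0, hn⟩⟩) d with hMdef
  set ma := Finset.univ.inf' (Finset.univ_nonempty_iff.mpr ⟨⟨0, hn⟩⟩) a with hmadef
  have hMd : ∀ i, M ≤ d i := fun i => Finset.inf'_le _ (Finset.mem_univ i)
  have hmaa : ∀ i, ma ≤ a i := fun i => Finset.inf'_le _ (Finset.mem_univ i)
  have hma0 : 0 < ma := by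
    rw [hmadef, Finset.lt_inf'_iff]
    exact fun i _ => ha i
  have hz1 : -M < z₁ := hz z₁ (by simp)
  have hz2 : -M < z₂ := hz z₂ (by simp)
  have hz3 : -M < z₃ := hz z₃ (by simp)
  have hp : ∀ i, 0 < z₁ + d i := fun i => by have := hMd i; linarith
  have hq : ∀ i, 0 < z₂ + d i := fun i => by have := hMd i; linarith
  have ht : ∀ i, 0 < z₃ + d i := fun i => by have := hMd i; linarith
  clear_value M ma
  set g₁ := ∑ i, a i / (z₁ + d i) with hg₁def
  set s₁ := ∑ i, a i / ((z₁ + d i) * (z₂ + d i)) with hs₁def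
  set s₂ := ∑ i, a i / ((z₂ + d i) * (z₃ + d i)) with hs₂def
  set s₃ := ∑ i, a i / ((z₁ + d i) * (z₃ + d i)) with hs₃def
  set w := ∑ i, a i / ((z₁ + d i) * (z₂ + d i) * (z₃ + d i)) with hwdef
  set u := ∑ i, a i / ((z₁ + d i) * (z₂ + d i) * (z₃ + d i) * (z₃ + d i)) with hudef
  set g₂ := ∑ i, a i / (z₂ + d i) with hg₂def
  set g₃ := ∑ i, a i / (z₃ + d i) with hg₃def
  set N := ∑ i, a i with hNdef
  have hne : (Finset.univ : Finset (Fin n)).Nonempty := Finset.univ_nonempty_iff.mpr ⟨⟨0, hn⟩⟩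
  have hs₁0 : 0 < s₁ :=
    Finset.sum_pos (fun i _ => div_pos (ha i) (mul_pos (hp i) (hq i))) hne
  have hs₂0 : 0 < s₂ :=
    Finset.sum_pos (fun i _ => div_pos (ha i) (mul_pos (hq i) (ht i))) hne
  have hs₃0 : 0 < s₃ :=
    Finset.sum_pos (fun i _ => div_pos (ha i) (mul_pos (hp i) (ht i))) hne
  have hw0 : 0 < w :=
    Finset.sum_pos (fun i _ => div_pos (ha i) (mul_pos (mul_pos (hp i) (hq i)) (ht i))) hne
  have hg₂0 : 0 < g₂ := Finset.sum_pos (fun i _ => div_pos (ha i) (hq i)) hne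
  have hg₃0 : 0 < g₃ := Finset.sum_pos (fun i _ => div_pos (ha i) (ht i)) hne
  -- key linear identities
  have e1 : g₁ - g₂ = (z₂ - z₁) * s₁ := by
    rw [hg₁def, hg₂def, hs₁def, ← Finset.sum_sub_distrib, Finset.mul_sum]
    refine Finset.sum_congr rfl fun i _ => ?_
    rw [show z₂ - z₁ = (z₂ + d i) - (z₁ + d i) by ring]
    exact auxE1 _ _ _ (hp i).ne' (hq i).ne'
  have e2 : g₂ - g₃ = (z₃ - z₂) * s₂ := by
    rw [hg₂def, hg₃def, hs₂def, ← Finset.sum_sub_distrib, Finset.mul_sum]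
    refine Finset.sum_congr rfl fun i _ => ?_
    rw [show z₃ - z₂ = (z₃ + d i) - (z₂ + d i) by ring]
    exact auxE1 _ _ _ (hq i).ne' (ht i).ne'
  have e3 : s₃ - s₂ = (z₂ - z₁) * w := by
    rw [hs₃def, hs₂def, hwdef, ← Finset.sum_sub_distrib, Finset.mul_sum]
    refine Finset.sum_congr rfl fun i _ => ?_
    rw [show z₂ - z₁ = (z₂ + d i) - (z₁ + d i) by ring]
    exact auxE2 _ _ _ _ (hp i).ne' (hq i).ne' (ht i).ne'
  have e4 : s₁ - s₃ = (z₃ - z₂) * w := by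
    rw [hs₁def, hs₃def, hwdef, ← Finset.sum_sub_distrib, Finset.mul_sum]
    refine Finset.sum_congr rfl fun i _ => ?_
    rw [show z₃ - z₂ = (z₃ + d i) - (z₂ + d i) by ring]
    exact auxE3 _ _ _ _ (hp i).ne' (hq i).ne' (ht i).ne'
  -- θ ≥ 0 : Chebyshev with μ = a/q, f = 1/p, g = 1/t
  have cθ : s₁ * s₂ ≤ g₂ * w := by
    have c : (∑ i, a i / (z₂ + d i) * (1 / (z₁ + d i))) *
          (∑ i, a i / (z₂ + d i) * (1 / (z₃ + d i))) ≤
        (∑ i, a i / (z₂ + d i)) *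
          (∑ i, a i / (z₂ + d i) * ((1 / (z₁ + d i)) * (1 / (z₃ + d i)))) :=
      cheb44 Finset.univ (fun i => a i / (z₂ + d i)) (fun i => 1 / (z₁ + d i))
        (fun i => 1 / (z₃ + d i))
        (fun i _ => (div_pos (ha i) (hq i)).le)
        (fun i _ j _ => by
          rcases le_total (d i) (d j) with hij | hij
          · have A1 : 1 / (z₁ + d j) ≤ 1 / (z₁ + d i) :=
              one_div_le_one_div_of_le (hp i) (by linarith)
            have A2 : 1 / (z₃ + d j) ≤ 1 / (z₃ + d i) :=
              one_div_le_one_div_of_le (ht i) (by linarith)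
            exact mul_nonneg (by linarith) (by linarith)
          · have A1 : 1 / (z₁ + d i) ≤ 1 / (z₁ + d j) :=
              one_div_le_one_div_of_le (hp j) (by linarith)
            have A2 : 1 / (z₃ + d i) ≤ 1 / (z₃ + d j) :=
              one_div_le_one_div_of_le (ht j) (by linarith)
            have hr : (1 / (z₁ + d i) - 1 / (z₁ + d j)) * (1 / (z₃ + d i) - 1 / (z₃ + d j))
                = (-(1 / (z₁ + d i) - 1 / (z₁ + d j))) * (-(1 / (z₃ + d i) - 1 / (z₃ + d j))) := by
              ring
            rw [hr]
            exact mul_nonneg (by linarith) (by linarith))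
    have T1 : ∑ i, a i / (z₂ + d i) * (1 / (z₁ + d i)) = s₁ := by
      rw [hs₁def]
      exact Finset.sum_congr rfl fun i _ => auxA6 _ _ _
    have T2 : ∑ i, a i / (z₂ + d i) * (1 / (z₃ + d i)) = s₂ := by
      rw [hs₂def]
      exact Finset.sum_congr rfl fun i _ => auxA7 _ _ _
    have T4 : ∑ i, a i / (z₂ + d i) * ((1 / (z₁ + d i)) * (1 / (z₃ + d i))) = w := by
      rw [hwdef]
      exact Finset.sum_congr rfl fun i _ => auxA8 _ _ _ _
    rw [T1, T2, T4] at c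
    exact c
  -- A ≤ N : two Chebyshev applications with μ = a/(pqt)
  have c1 : s₂ * s₃ ≤ w * g₃ := by
    have c : (∑ i, a i / ((z₁ + d i) * (z₂ + d i) * (z₃ + d i)) * (z₁ + d i)) *
          (∑ i, a i / ((z₁ + d i) * (z₂ + d i) * (z₃ + d i)) * (z₂ + d i)) ≤
        (∑ i, a i / ((z₁ + d i) * (z₂ + d i) * (z₃ + d i))) *
          (∑ i, a i / ((z₁ + d i) * (z₂ + d i) * (z₃ + d i)) * ((z₁ + d i) * (z₂ + d i))) :=
      cheb44 Finset.univ (fun i => a i / ((z₁ + d i) * (z₂ + d i) * (z₃ + d i)))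
        (fun i => z₁ + d i) (fun i => z₂ + d i)
        (fun i _ => (div_pos (ha i) (mul_pos (mul_pos (hp i) (hq i)) (ht i))).le)
        (fun i _ j _ => by
          have hr : (z₁ + d i - (z₁ + d j)) * (z₂ + d i - (z₂ + d j)) = (d i - d j) ^ 2 := by
            ring
          rw [hr]; positivity)
    have T1 : ∑ i, a i / ((z₁ + d i) * (z₂ + d i) * (z₃ + d i)) * (z₁ + d i) = s₂ := by
      rw [hs₂def]
      exact Finset.sum_congr rfl fun i _ =>
        auxA1 _ _ _ _ (hp i).ne' (hq i).ne' (ht i).ne'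
    have T2 : ∑ i, a i / ((z₁ + d i) * (z₂ + d i) * (z₃ + d i)) * (z₂ + d i) = s₃ := by
      rw [hs₃def]
      exact Finset.sum_congr rfl fun i _ =>
        auxA2 _ _ _ _ (hp i).ne' (hq i).ne' (ht i).ne'
    have T4 : ∑ i, a i / ((z₁ + d i) * (z₂ + d i) * (z₃ + d i)) * ((z₁ + d i) * (z₂ + d i))
        = g₃ := by
      rw [hg₃def]
      exact Finset.sum_congr rfl fun i _ =>
        auxA3 _ _ _ _ (hp i).ne' (hq i).ne' (ht i).ne'
    rw [T1, T2, T4] at c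
    exact c
  have c2 : g₃ * s₁ ≤ w * N := by
    have c : (∑ i, a i / ((z₁ + d i) * (z₂ + d i) * (z₃ + d i)) * ((z₁ + d i) * (z₂ + d i))) *
          (∑ i, a i / ((z₁ + d i) * (z₂ + d i) * (z₃ + d i)) * (z₃ + d i)) ≤
        (∑ i, a i / ((z₁ + d i) * (z₂ + d i) * (z₃ + d i))) *
          (∑ i, a i / ((z₁ + d i) * (z₂ + d i) * (z₃ + d i))
            * ((z₁ + d i) * (z₂ + d i) * (z₃ + d i))) :=
      cheb44 Finset.univ (fun i => a i / ((z₁ + d i) * (z₂ + d i) * (z₃ + d i)))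
        (fun i => (z₁ + d i) * (z₂ + d i)) (fun i => z₃ + d i)
        (fun i _ => (div_pos (ha i) (mul_pos (mul_pos (hp i) (hq i)) (ht i))).le)
        (fun i _ j _ => by
          have hr : ((z₁ + d i) * (z₂ + d i) - (z₁ + d j) * (z₂ + d j)) * (z₃ + d i - (z₃ + d j))
              = (d i - d j) ^ 2 * ((z₂ + d i) + (z₁ + d j)) := by ring
          rw [hr]
          exact mul_nonneg (sq_nonneg _) (by have := hq i; have := hp j; linarith))
    have T1 : ∑ i, a i / ((z₁ + d i) * (z₂ + d i) * (z₃ + d i)) * ((z₁ + d i) * (z₂ + d i))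
        = g₃ := by
      rw [hg₃def]
      exact Finset.sum_congr rfl fun i _ =>
        auxA3 _ _ _ _ (hp i).ne' (hq i).ne' (ht i).ne'
    have T2 : ∑ i, a i / ((z₁ + d i) * (z₂ + d i) * (z₃ + d i)) * (z₃ + d i) = s₁ := by
      rw [hs₁def]
      exact Finset.sum_congr rfl fun i _ =>
        auxA4 _ _ _ _ (hp i).ne' (hq i).ne' (ht i).ne'
    have T4 : ∑ i, a i / ((z₁ + d i) * (z₂ + d i) * (z₃ + d i))
        * ((z₁ + d i) * (z₂ + d i) * (z₃ + d i)) = N := by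
      rw [hNdef]
      exact Finset.sum_congr rfl fun i _ =>
        auxA5 _ _ _ _ (hp i).ne' (hq i).ne' (ht i).ne'
    rw [T1, T2, T4] at c
    exact c
  -- ma ≤ A : Cauchy-Schwarz (cheb with f = g) and a diagonal bound
  have csw : w * w ≤ s₁ * u := by
    have c : (∑ i, a i / ((z₁ + d i) * (z₂ + d i)) * (1 / (z₃ + d i))) *
          (∑ i, a i / ((z₁ + d i) * (z₂ + d i)) * (1 / (z₃ + d i))) ≤
        (∑ i, a i / ((z₁ + d i) * (z₂ + d i))) *
          (∑ i, a i / ((z₁ + d i) * (z₂ + d i)) * ((1 / (z₃ + d i)) * (1 / (z₃ + d i)))) :=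
      cheb44 Finset.univ (fun i => a i / ((z₁ + d i) * (z₂ + d i)))
        (fun i => 1 / (z₃ + d i)) (fun i => 1 / (z₃ + d i))
        (fun i _ => (div_pos (ha i) (mul_pos (hp i) (hq i))).le)
        (fun i _ j _ => mul_self_nonneg _)
    have T1 : ∑ i, a i / ((z₁ + d i) * (z₂ + d i)) * (1 / (z₃ + d i)) = w := by
      rw [hwdef]
      exact Finset.sum_congr rfl fun i _ => auxA9 _ _ _ _
    have T4 : ∑ i, a i / ((z₁ + d i) * (z₂ + d i)) * ((1 / (z₃ + d i)) * (1 / (z₃ + d i)))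
        = u := by
      rw [hudef]
      exact Finset.sum_congr rfl fun i _ => auxA10 _ _ _ _
    rw [T1, T4] at c
    exact c
  have diag : ∑ i, (a i / ((z₂ + d i) * (z₃ + d i))) * (a i / ((z₁ + d i) * (z₃ + d i)))
      ≤ s₂ * s₃ := by
    rw [hs₂def, hs₃def, Finset.sum_mul]
    refine Finset.sum_le_sum fun i _ => ?_
    refine mul_le_mul_of_nonneg_left ?_ (div_pos (ha i) (mul_pos (hq i) (ht i))).le
    exact Finset.single_le_sum (fun j _ => (div_pos (ha j) (mul_pos (hp j) (ht j))).le)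
      (Finset.mem_univ i)
  have mau : ma * u
      ≤ ∑ i, (a i / ((z₂ + d i) * (z₃ + d i))) * (a i / ((z₁ + d i) * (z₃ + d i))) := by
    rw [hudef, Finset.mul_sum]
    refine Finset.sum_le_sum fun i _ => ?_
    rw [auxA11]
    exact mul_le_mul_of_nonneg_right (hmaa i)
      (div_pos (ha i) (mul_pos (mul_pos (mul_pos (hp i) (hq i)) (ht i)) (ht i))).le
  -- D ≥ M
  have hDM : (z₁ + M) * w ≤ s₂ := by
    rw [hs₂def, hwdef, Finset.mul_sum]
    refine Finset.sum_le_sum fun i _ => ?_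
    rw [auxA12 (a i) (z₁ + d i) (z₂ + d i) (z₃ + d i) (hp i).ne' (hq i).ne' (ht i).ne']
    exact mul_le_mul_of_nonneg_right (by have := hMd i; linarith)
      (div_pos (ha i) (mul_pos (mul_pos (hp i) (hq i)) (ht i))).le
  clear_value g₁ s₁ s₂ s₃ w u g₂ g₃ N
  have hAN : s₁ * s₂ * s₃ ≤ N * w ^ 2 := by
    have t1 : s₁ * (s₂ * s₃) ≤ s₁ * (w * g₃) := mul_le_mul_of_nonneg_left c1 hs₁0.le
    have t2 : w * (g₃ * s₁) ≤ w * (w * N) := mul_le_mul_of_nonneg_left c2 hw0.le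
    calc s₁ * s₂ * s₃ = s₁ * (s₂ * s₃) := by ring
      _ ≤ s₁ * (w * g₃) := t1
      _ = w * (g₃ * s₁) := by ring
      _ ≤ w * (w * N) := t2
      _ = N * w ^ 2 := by ring
  have hmaA : ma * w ^ 2 ≤ s₁ * s₂ * s₃ := by
    have t1 : ma * (w * w) ≤ ma * (s₁ * u) := mul_le_mul_of_nonneg_left csw hma0.le
    have t2 : s₁ * (ma * u) ≤ s₁ * (s₂ * s₃) :=
      mul_le_mul_of_nonneg_left (mau.trans diag) hs₁0.le
    calc ma * w ^ 2 = ma * (w * w) := by ring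
      _ ≤ ma * (s₁ * u) := t1
      _ = s₁ * (ma * u) := by ring
      _ ≤ s₁ * (s₂ * s₃) := t2
      _ = s₁ * s₂ * s₃ := by ring
  refine ⟨s₁ * s₂ * s₃ / w ^ 2, s₂ / w - z₁, g₂ - s₁ * s₂ / w, ?_, ?_, ?_, ?_, ?_⟩
  · exact (le_div_iff₀ (by positivity)).mpr hmaA
  · exact (div_le_iff₀ (by positivity)).mpr hAN
  · have : z₁ + M ≤ s₂ / w := (le_div_iff₀ hw0).mpr hDM
    linarith
  · have : s₁ * s₂ / w ≤ g₂ := (div_le_iff₀ hw0).mpr cθ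
    linarith
  · intro zj hzj
    have hw' := hw0.ne'
    have hs₂' := hs₂0.ne'
    have hs₃' := hs₃0.ne'
    have hs₁' := hs₁0.ne'
    simp only [Set.mem_insert_iff, Set.mem_singleton_iff] at hzj
    rcases hzj with rfl | rfl | rfl
    · -- zj = z₁
      rw [← hg₁def, show zj + (s₂ / w - zj) = s₂ / w by ring,
        show s₁ * s₂ * s₃ / w ^ 2 / (s₂ / w) = s₁ * s₃ / w by field_simp]
      have hzz : z₂ - zj = (s₃ - s₂) / w := by
        rw [eq_div_iff hw']; linarith [e3]
      have hg1 : g₁ = g₂ + (z₂ - zj) * s₁ := by linarith [e1]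
      rw [hg1, hzz]
      ring
    · -- zj = z₂
      have hzz : zj - z₁ = (s₃ - s₂) / w := by
        rw [eq_div_iff hw']; linarith [e3]
      rw [← hg₂def, show zj + (s₂ / w - z₁) = (zj - z₁) + s₂ / w by ring, hzz,
        show (s₃ - s₂) / w + s₂ / w = s₃ / w by ring,
        show s₁ * s₂ * s₃ / w ^ 2 / (s₃ / w) = s₁ * s₂ / w by field_simp]
      ring
    · -- zj = z₃
      have hzz : zj - z₁ = (s₁ - s₂) / w := by
        rw [eq_div_iff hw']; linarith [e3, e4]
      rw [← hg₃def, show zj + (s₂ / w - z₁) = (zj - z₁) + s₂ / w by ring, hzz,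
        show (s₁ - s₂) / w + s₂ / w = s₁ / w by ring,
        show s₁ * s₂ * s₃ / w ^ 2 / (s₁ / w) = s₂ * s₃ / w by field_simp]
      have hzz2 : zj - z₂ = (s₁ - s₃) / w := by
        rw [eq_div_iff hw']; linarith [e4]
      have hg3 : g₃ = g₂ - (zj - z₂) * s₂ := by linarith [e2]
      rw [hg3, hzz2]
      ring
end

section
/- Let n ≥ 1 and let a₀, a₁,…,a_n and e₀, e₁,…,e_n be real numbers satisfying a_i > 1 and e_i > 1 for i = 1,…,n, a₀ > Σ_{i=1}^n a_i, and e₀ > 0. Then the following three inequalities cannot hold simultaneously: (1) a₀/e₀ ≤ Σ_{i=1}^n a_i/e_i − 1; (2) a₀/e₀² ≥ Σ_{i=1}^n a_i/e_i² − 1; (3) a₀/e₀³ ≤ Σ_{i=1}^n a_i/e_i³ − 1. (This is Lemma 4.5.) -/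
/-- Lemma 4.5: if `a_i > 1`, `e_i > 1` for `i = 1, …, n`, `a₀ > ∑ a_i` and `e₀ > 0`, then the
three inequalities `a₀/e₀ ≤ ∑ a_i/e_i − 1`, `a₀/e₀² ≥ ∑ a_i/e_i² − 1` and
`a₀/e₀³ ≤ ∑ a_i/e_i³ − 1` cannot hold simultaneously. -/
theorem lemma45 (n : ℕ) (hn : 1 ≤ n) (a e : Fin n → ℝ) (a₀ e₀ : ℝ)
    (ha : ∀ i, 1 < a i) (he : ∀ i, 1 < e i)
    (ha₀ : ∑ i, a i < a₀) (he₀ : 0 < e₀) :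
    ¬ (a₀ / e₀ ≤ (∑ i, a i / e i) - 1 ∧
       (∑ i, a i / (e i) ^ 2) - 1 ≤ a₀ / e₀ ^ 2 ∧
       a₀ / e₀ ^ 3 ≤ (∑ i, a i / (e i) ^ 3) - 1) := by
  rintro ⟨h1, h2, h3⟩
  have hne : Nonempty (Fin n) := ⟨⟨0, hn⟩⟩
  have hepos : ∀ i, (0:ℝ) < e i := fun i => lt_trans one_pos (he i)
  have hapos : ∀ i, (0:ℝ) < a i := fun i => lt_trans one_pos (ha i)
  have he₀ne : e₀ ≠ 0 := ne_of_gt he₀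
  -- Cauchy–Schwarz with weights a i * (1 - 1/e i)
  set f : Fin n → ℝ := fun i => Real.sqrt (a i * (1 - 1 / e i)) with hf
  set g : Fin n → ℝ := fun i => f i / e i with hg
  have hf2 : ∀ i, f i ^ 2 = a i * (1 - 1 / e i) := by
    intro i
    apply Real.sq_sqrt
    have h' : 1 / e i < 1 := by
      rw [div_lt_one (hepos i)]; exact he i
    nlinarith [(hapos i).le]
  have key : (∑ i, f i * g i) ^ 2 ≤ (∑ i, f i ^ 2) * ∑ i, g i ^ 2 :=
    Finset.sum_mul_sq_le_sq_mul_sq Finset.univ f g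
  have e1 : ∑ i, f i * g i = (∑ i, a i / e i) - ∑ i, a i / (e i) ^ 2 := by
    rw [← Finset.sum_sub_distrib]
    apply Finset.sum_congr rfl
    intro i _
    have hne' : e i ≠ 0 := ne_of_gt (hepos i)
    rw [show f i * g i = f i ^ 2 / e i by rw [hg]; ring, hf2 i]
    field_simp
  have e2 : ∑ i, f i ^ 2 = (∑ i, a i) - ∑ i, a i / e i := by
    rw [← Finset.sum_sub_distrib]
    apply Finset.sum_congr rfl
    intro i _
    have hne' : e i ≠ 0 := ne_of_gt (hepos i)
    rw [hf2 i]
    field_simp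
  have e3 : ∑ i, g i ^ 2 = (∑ i, a i / (e i) ^ 2) - ∑ i, a i / (e i) ^ 3 := by
    rw [← Finset.sum_sub_distrib]
    apply Finset.sum_congr rfl
    intro i _
    have hne' : e i ≠ 0 := ne_of_gt (hepos i)
    rw [show g i ^ 2 = f i ^ 2 / e i ^ 2 by rw [hg]; ring, hf2 i]
    field_simp
  rw [e1, e2, e3] at key
  clear hf2 e1 e2 e3 hf hg
  -- abbreviations
  set A := ∑ i, a i with hA
  set S1 := ∑ i, a i / e i with hS1
  set S2 := ∑ i, a i / (e i) ^ 2 with hS2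
  set S3 := ∑ i, a i / (e i) ^ 3 with hS3
  have hApos : 0 < A := Finset.sum_pos (fun i _ => hapos i) Finset.univ_nonempty
  have ha₀pos : 0 < a₀ := lt_trans hApos ha₀
  have hS1A : S1 < A := by
    rw [hS1, hA]
    apply Finset.sum_lt_sum_of_nonempty Finset.univ_nonempty
    intro i _
    exact div_lt_self (hapos i) (he i)
  clear_value A S1 S2 S3
  -- e₀ > 1
  have he₀1 : 1 < e₀ := by
    have h : a₀ / e₀ < a₀ := by linarith
    have h' : a₀ < a₀ * e₀ := by rwa [div_lt_iff₀ he₀] at h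
    nlinarith
  set t := a₀ / e₀ with ht
  have htpos : 0 < t := div_pos ha₀pos he₀
  have q2 : a₀ / e₀ ^ 2 = t / e₀ := by rw [ht]; ring
  have q3 : a₀ / e₀ ^ 3 = t / e₀ ^ 2 := by rw [ht]; ring
  set u := t - t / e₀ with hu
  have hte₀ : t / e₀ < t := div_lt_self htpos he₀1
  have hupos : 0 < u := by rw [hu]; linarith
  have c6 : u * e₀ = a₀ - t := by
    rw [hu, ht]; field_simp
  have hq : t / e₀ - t / e₀ ^ 2 = u / e₀ := by rw [hu]; ring
  clear_value t u
  rw [q2] at h2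
  rw [q3] at h3
  -- consequences of the three hypotheses
  have h12 : u ≤ S1 - S2 := by rw [hu]; linarith
  have h23 : S2 - S3 ≤ u / e₀ := by linarith [hq]
  -- chain the inequalities
  have c1 : u ^ 2 ≤ (S1 - S2) ^ 2 := by nlinarith
  have c2 : (A - S1) * (S2 - S3) ≤ (A - S1) * (u / e₀) :=
    mul_le_mul_of_nonneg_left h23 (by linarith)
  have c3 : u ^ 2 ≤ (A - S1) * u / e₀ := by
    have h' : (A - S1) * (u / e₀) = (A - S1) * u / e₀ := by ring
    linarith [h']
  have c4 : u ^ 2 * e₀ ≤ (A - S1) * u := (le_div_iff₀ he₀).mp c3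
  have c5 : u * e₀ ≤ A - S1 := by
    have h' : (u * e₀) * u ≤ (A - S1) * u := by nlinarith
    exact le_of_mul_le_mul_right h' hupos
  -- final contradiction: A ≥ 1 + a₀ > a₀ > A
  linarith [c5, c6, h1, ha₀]
end

section
/- Define E(x, y, z) := (1−x)²(yz−x)(y−z)² + (1−y)²(xz−y)(x−z)² + (1−z)²(xy−z)(x−y)². Then for any x, y, z ∈ (0, 1) which are not all equal (i.e. ¬(x = y ∧ y = z)), one has E(x, y, z) < 0. (This is Lemma 4.6; when x = y = z each summand vanishes, so the non-all-equal hypothesis is needed for strictness.) -/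
theorem aux46 (a b c u : ℝ) (ha : 0 ≤ a) (hb : 0 ≤ b) (hc : 0 < c) (hu : 0 < u)
    (hab : 0 < a + b) :
    0 < 2*b^2*c*u^3 + 2*b^3*u^3 + 2*b^3*c*u^2 + 2*b^4*u^2 + 2*a*b*c*u^3 + 3*a*b^2*u^3 + 6*a*b^2*c*u^2 + 7*a*b^3*u^2 + 2*a*b^3*c*u + 2*a*b^4*u + 2*a^2*c*u^3 + a^2*b*u^3 + 6*a^2*b*c*u^2 + 7*a^2*b^2*u^2 + 4*a^2*b^2*c*u + 5*a^2*b^3*u + 4*a^3*c*u^2 + 2*a^3*b*u^2 + 4*a^3*b*c*u + 4*a^3*b^2*u + 2*a^4*c*u + a^4*b*u := by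
  have h0 : (0:ℝ) ≤ b^2*c*u^3 := (mul_nonneg (mul_nonneg (pow_nonneg hb 2) hc.le) (pow_nonneg hu.le 3))
  have h1 : (0:ℝ) ≤ b^3*u^3 := (mul_nonneg (pow_nonneg hb 3) (pow_nonneg hu.le 3))
  have h2 : (0:ℝ) ≤ b^3*c*u^2 := (mul_nonneg (mul_nonneg (pow_nonneg hb 3) hc.le) (pow_nonneg hu.le 2))
  have h3 : (0:ℝ) ≤ b^4*u^2 := (mul_nonneg (pow_nonneg hb 4) (pow_nonneg hu.le 2))
  have h4 : (0:ℝ) ≤ a*b*c*u^3 := (mul_nonneg (mul_nonneg (mul_nonneg ha hb) hc.le) (pow_nonneg hu.le 3))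
  have h5 : (0:ℝ) ≤ a*b^2*u^3 := (mul_nonneg (mul_nonneg ha (pow_nonneg hb 2)) (pow_nonneg hu.le 3))
  have h6 : (0:ℝ) ≤ a*b^2*c*u^2 := (mul_nonneg (mul_nonneg (mul_nonneg ha (pow_nonneg hb 2)) hc.le) (pow_nonneg hu.le 2))
  have h7 : (0:ℝ) ≤ a*b^3*u^2 := (mul_nonneg (mul_nonneg ha (pow_nonneg hb 3)) (pow_nonneg hu.le 2))
  have h8 : (0:ℝ) ≤ a*b^3*c*u := (mul_nonneg (mul_nonneg (mul_nonneg ha (pow_nonneg hb 3)) hc.le) hu.le)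
  have h9 : (0:ℝ) ≤ a*b^4*u := (mul_nonneg (mul_nonneg ha (pow_nonneg hb 4)) hu.le)
  have h10 : (0:ℝ) ≤ a^2*c*u^3 := (mul_nonneg (mul_nonneg (pow_nonneg ha 2) hc.le) (pow_nonneg hu.le 3))
  have h11 : (0:ℝ) ≤ a^2*b*u^3 := (mul_nonneg (mul_nonneg (pow_nonneg ha 2) hb) (pow_nonneg hu.le 3))
  have h12 : (0:ℝ) ≤ a^2*b*c*u^2 := (mul_nonneg (mul_nonneg (mul_nonneg (pow_nonneg ha 2) hb) hc.le) (pow_nonneg hu.le 2))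
  have h13 : (0:ℝ) ≤ a^2*b^2*u^2 := (mul_nonneg (mul_nonneg (pow_nonneg ha 2) (pow_nonneg hb 2)) (pow_nonneg hu.le 2))
  have h14 : (0:ℝ) ≤ a^2*b^2*c*u := (mul_nonneg (mul_nonneg (mul_nonneg (pow_nonneg ha 2) (pow_nonneg hb 2)) hc.le) hu.le)
  have h15 : (0:ℝ) ≤ a^2*b^3*u := (mul_nonneg (mul_nonneg (pow_nonneg ha 2) (pow_nonneg hb 3)) hu.le)
  have h16 : (0:ℝ) ≤ a^3*c*u^2 := (mul_nonneg (mul_nonneg (pow_nonneg ha 3) hc.le) (pow_nonneg hu.le 2))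
  have h17 : (0:ℝ) ≤ a^3*b*u^2 := (mul_nonneg (mul_nonneg (pow_nonneg ha 3) hb) (pow_nonneg hu.le 2))
  have h18 : (0:ℝ) ≤ a^3*b*c*u := (mul_nonneg (mul_nonneg (mul_nonneg (pow_nonneg ha 3) hb) hc.le) hu.le)
  have h19 : (0:ℝ) ≤ a^3*b^2*u := (mul_nonneg (mul_nonneg (pow_nonneg ha 3) (pow_nonneg hb 2)) hu.le)
  have h20 : (0:ℝ) ≤ a^4*c*u := (mul_nonneg (mul_nonneg (pow_nonneg ha 4) hc.le) hu.le)
  have h21 : (0:ℝ) ≤ a^4*b*u := (mul_nonneg (mul_nonneg (pow_nonneg ha 4) hb) hu.le)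
  rcases ha.lt_or_eq with ha' | ha'
  · have hs : (0:ℝ) < a^3*c*u^2 := mul_pos (mul_pos (pow_pos ha' 3) hc) (pow_pos hu 2)
    linarith
  · have hb' : 0 < b := by linarith
    have hs : (0:ℝ) < b^3*u^3 := mul_pos (pow_pos hb' 3) (pow_pos hu 3)
    linarith

theorem ordered46 (x y z : ℝ) (hz0 : 0 < z) (hzy : z ≤ y) (hyx : y ≤ x) (hx1 : x < 1)
    (hzx : z < x) :
    (1 - x) ^ 2 * (y * z - x) * (y - z) ^ 2
      + (1 - y) ^ 2 * (x * z - y) * (x - z) ^ 2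
      + (1 - z) ^ 2 * (x * y - z) * (x - y) ^ 2 < 0 := by
  have h := aux46 (x - y) (y - z) z (1 - x) (by linarith) (by linarith) hz0 (by linarith)
    (by linarith)
  nlinarith [h]

/-- Lemma 4.6: for `x, y, z ∈ (0, 1)` not all equal,
`E(x,y,z) = (1−x)²(yz−x)(y−z)² + (1−y)²(xz−y)(x−z)² + (1−z)²(xy−z)(x−y)² < 0`. -/
theorem lemma46 (x y z : ℝ)
    (hx : x ∈ Set.Ioo (0 : ℝ) 1) (hy : y ∈ Set.Ioo (0 : ℝ) 1) (hz : z ∈ Set.Ioo (0 : ℝ) 1)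
    (hne : ¬ (x = y ∧ y = z)) :
    (1 - x) ^ 2 * (y * z - x) * (y - z) ^ 2
      + (1 - y) ^ 2 * (x * z - y) * (x - z) ^ 2
      + (1 - z) ^ 2 * (x * y - z) * (x - y) ^ 2 < 0 := by
  obtain ⟨hx0, hx1⟩ := hx
  obtain ⟨hy0, hy1⟩ := hy
  obtain ⟨hz0, hz1⟩ := hz
  have hne' : x ≠ y ∨ y ≠ z := by
    by_contra h; push_neg at h; exact hne ⟨h.1, h.2⟩
  rcases le_total x y with h1 | h1 <;> rcases le_total y z with h2 | h2 <;>
    rcases le_total x z with h3 | h3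
  · -- x ≤ y ≤ z
    have hxz : x < z := by
      rcases lt_or_eq_of_le h3 with h | h
      · exact h
      · exfalso; rcases hne' with h' | h' <;> [exact h' (le_antisymm h1 (by linarith));
          exact h' (le_antisymm h2 (by linarith))]
    have h := ordered46 z y x hx0 h1 h2 hz1 hxz
    nlinarith [h]
  · -- x ≤ y, y ≤ z, z ≤ x : all equal, contradiction
    have hxz : x < z := by
      rcases lt_or_eq_of_le (h1.trans h2) with h | h
      · exact h
      · exfalso; rcases hne' with h' | h' <;> [exact h' (le_antisymm h1 (by linarith));
          exact h' (le_antisymm h2 (by linarith))]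
    linarith
  · -- x ≤ y, z ≤ y, x ≤ z : x ≤ z ≤ y
    have hxy : x < y := by
      rcases lt_or_eq_of_le h1 with h | h
      · exact h
      · exfalso; rcases hne' with h' | h' <;> [exact h' h;
          exact h' (le_antisymm (by linarith) (by linarith))]
    have h := ordered46 y z x hx0 h3 h2 hy1 hxy
    nlinarith [h]
  · -- x ≤ y, z ≤ y, z ≤ x : z ≤ x ≤ y
    have hzy : z < y := by
      rcases lt_or_eq_of_le (h3.trans h1) with h | h
      · exact h
      · exfalso; rcases hne' with h' | h' <;> [exact h' (le_antisymm h1 (by linarith));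
          exact h' (le_antisymm (by linarith) h2)]
    have h := ordered46 y x z hz0 h3 h1 hy1 hzy
    nlinarith [h]
  · -- y ≤ x, y ≤ z, x ≤ z : y ≤ x ≤ z
    have hyz : y < z := by
      rcases lt_or_eq_of_le (h1.trans h3) with h | h
      · exact h
      · exfalso; rcases hne' with h' | h' <;> [exact h' (le_antisymm (by linarith) h1);
          exact h' (le_antisymm h2 (by linarith))]
    have h := ordered46 z x y hy0 h1 h3 hz1 hyz
    nlinarith [h]
  · -- y ≤ x, y ≤ z, z ≤ x : y ≤ z ≤ x
    have hyx : y < x := by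
      rcases lt_or_eq_of_le (h2.trans h3) with h | h
      · exact h
      · exfalso; rcases hne' with h' | h' <;> [exact h' (le_antisymm (by linarith) h1);
          exact h' (le_antisymm h2 (by linarith))]
    have h := ordered46 x z y hy0 h2 h3 hx1 hyx
    nlinarith [h]
  · -- y ≤ x, z ≤ y, x ≤ z : all equal
    have : x < z := by
      rcases lt_or_eq_of_le h3 with h | h
      · exact h
      · exfalso; rcases hne' with h' | h' <;> [exact h' (le_antisymm (by linarith) h1);
          exact h' (le_antisymm (by linarith) h2)]
    linarith
  · -- y ≤ x, z ≤ y, z ≤ x : z ≤ y ≤ x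
    have hzx : z < x := by
      rcases lt_or_eq_of_le h3 with h | h
      · exact h
      · exfalso; rcases hne' with h' | h' <;> [exact h' (le_antisymm (by linarith) h1);
          exact h' (le_antisymm (by linarith) h2)]
    exact ordered46 x y z hz0 h2 h1 hx1 hzx
end

section
/- Suppose S₁, S₂, S₃ and S₄ are all non-empty, and fix real numbers d₁,…,d_s. Suppose m ∈ S₄ satisfies d_m = min_{i∈S₁∪S₄} d_i and n ∈ S₃ satisfies d_n = min_{i∈S₂∪S₃} d_i, and suppose a_m ≥ Σ_{i∈S₁} a_i and a_n ≥ Σ_{i∈S₂} a_i. Then g′(z) ≤ 0 for every z in the interval (−d_m, d_n). (This is the monotonicity claim of Case 3 in the necessity proof of Theorem 3.1(a).) -/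
open Finset

/-- Case 3 of the necessity proof of Theorem 3.1(a): if `m ∈ S4` attains
`min_{i ∈ S1 ∪ S4} d i`, `n ∈ S3` attains `min_{i ∈ S2 ∪ S3} d i`, and
`a m ≥ ∑_{i ∈ S1} a i`, `a n ≥ ∑_{i ∈ S2} a i`, then `g' ≤ 0` on `(-d m, d n)`. -/
theorem case3_gDeriv_nonpos
    {s : ℕ} (hs : 0 < s)
    (S1 S2 S3 S4 : Finset (Fin s))
    (h12 : Disjoint S1 S2) (h13 : Disjoint S1 S3) (h14 : Disjoint S1 S4)
    (h23 : Disjoint S2 S3) (h24 : Disjoint S2 S4) (h34 : Disjoint S3 S4)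
    (hcover : S1 ∪ S2 ∪ S3 ∪ S4 = Finset.univ)
    (a : Fin s → ℝ) (ha : ∀ i, 0 < a i)
    (hS1 : S1.Nonempty) (hS2 : S2.Nonempty) (hS3 : S3.Nonempty) (hS4 : S4.Nonempty)
    (d : Fin s → ℝ) (m n : Fin s) (hm : m ∈ S4) (hn : n ∈ S3)
    (hdm : ∀ i ∈ S1 ∪ S4, d m ≤ d i)
    (hdn : ∀ i ∈ S2 ∪ S3, d n ≤ d i)
    (ham : ∑ i ∈ S1, a i ≤ a m) (han : ∑ i ∈ S2, a i ≤ a n) :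
    ∀ z ∈ Set.Ioo (-d m) (d n), gDeriv S1 S2 S3 S4 a d z ≤ 0 := by
  intro z hz
  obtain ⟨hz1, hz2⟩ := hz
  have hzm : 0 < z + d m := by linarith
  have hzn : 0 < d n - z := by linarith
  have h14p : ∀ i ∈ S1 ∪ S4, 0 < z + d i := fun i hi => by
    have := hdm i hi; linarith
  have h23p : ∀ i ∈ S2 ∪ S3, 0 < d i - z := fun i hi => by
    have := hdn i hi; linarith
  have key1 : ∑ i ∈ S1, a i / (z + d i) ≤ ∑ i ∈ S4, a i / (z + d i) := by
    calc ∑ i ∈ S1, a i / (z + d i) ≤ ∑ i ∈ S1, a i / (z + d m) := by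
          apply Finset.sum_le_sum
          intro i hi
          gcongr
          · exact (ha i).le
          · exact hdm i (Finset.mem_union_left _ hi)
      _ = (∑ i ∈ S1, a i) / (z + d m) := by rw [Finset.sum_div]
      _ ≤ a m / (z + d m) := by gcongr
      _ ≤ ∑ i ∈ S4, a i / (z + d i) :=
          Finset.single_le_sum
            (fun i hi => div_nonneg (ha i).le (h14p i (Finset.mem_union_right _ hi)).le) hm
  have key2 : ∑ i ∈ S2, a i / (d i - z) ≤ ∑ i ∈ S3, a i / (d i - z) := by
    calc ∑ i ∈ S2, a i / (d i - z) ≤ ∑ i ∈ S2, a i / (d n - z) := by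
          apply Finset.sum_le_sum
          intro i hi
          gcongr
          · exact (ha i).le
          · exact hdn i (Finset.mem_union_left _ hi)
      _ = (∑ i ∈ S2, a i) / (d n - z) := by rw [Finset.sum_div]
      _ ≤ a n / (d n - z) := by gcongr
      _ ≤ ∑ i ∈ S3, a i / (d i - z) :=
          Finset.single_le_sum
            (fun i hi => div_nonneg (ha i).le (h23p i (Finset.mem_union_right _ hi)).le) hn
  unfold gDeriv
  linarith
end

section
/- Let S₁, S₂, S₃, S₄ be non-empty finite index sets, let a_i > 0 for all indices, let d_i be real numbers, and let z₀ be a real number such that z₀ + d_i > 0 for all i ∈ S₁∪S₄ and d_i − z₀ > 0 for all i ∈ S₂∪S₃. Assume: (i) Σ_{i∈S₁} a_i ≤ a_j for every j ∈ S₄; (ii) Σ_{i∈S₂} a_i ≤ a_j for every j ∈ S₃; (iii) Σ_{i∈S₁} a_i/(z₀+d_i) + Σ_{i∈S₂} a_i/(d_i−z₀) > Σ_{i∈S₃} a_i/(d_i−z₀) + Σ_{i∈S₄} a_i/(z₀+d_i); and (iv) Σ_{i∈S₁} a_i/(z₀+d_i)² + Σ_{i∈S₃} a_i/(d_i−z₀)²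 = Σ_{i∈S₂} a_i/(d_i−z₀)² + Σ_{i∈S₄} a_i/(z₀+d_i)². Then Σ_{i∈S₁} a_i/(z₀+d_i)² > Σ_{i∈S₄} a_i/(z₀+d_i)². (This is Step 1 of Case 4 in the necessity proof of Theorem 3.1(a).) -/
/-- Key comparison lemma: if each weight on `T` dominates the total weight on `S`,
and the square-denominator sum on `S` is at most that on `T`, then the same holds
for first powers. -/
lemma case4_key {ι : Type*} (S T : Finset ι) (a u v : ι → ℝ)
    (haS : ∀ i ∈ S, 0 < a i) (haT : ∀ j ∈ T, 0 < a j)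
    (hu : ∀ i ∈ S, 0 < u i) (hv : ∀ j ∈ T, 0 < v j)
    (hM : ∀ j ∈ T, ∑ i ∈ S, a i ≤ a j)
    (hS : S.Nonempty)
    (h : ∑ i ∈ S, a i / u i ^ 2 ≤ ∑ j ∈ T, a j / v j ^ 2) :
    ∑ i ∈ S, a i / u i ≤ ∑ j ∈ T, a j / v j := by
  set M := ∑ i ∈ S, a i with hMdef
  have hMpos : 0 < M := Finset.sum_pos haS hS
  -- Cauchy–Schwarz on S : (∑ a/u)^2 ≤ M * ∑ a/u^2
  have hCS : (∑ i ∈ S, a i / u i) ^ 2 ≤ M * ∑ i ∈ S, a i / u i ^ 2 := by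
    have h1 : (∑ i ∈ S, Real.sqrt (a i) * (Real.sqrt (a i) / u i)) ^ 2
        ≤ (∑ i ∈ S, Real.sqrt (a i) ^ 2) * ∑ i ∈ S, (Real.sqrt (a i) / u i) ^ 2 :=
      Finset.sum_mul_sq_le_sq_mul_sq S _ _
    have e1 : ∑ i ∈ S, Real.sqrt (a i) * (Real.sqrt (a i) / u i) = ∑ i ∈ S, a i / u i := by
      refine Finset.sum_congr rfl fun i hi => ?_
      rw [mul_div_assoc', Real.mul_self_sqrt (haS i hi).le]
    have e2 : ∑ i ∈ S, Real.sqrt (a i) ^ 2 = M := by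
      refine Finset.sum_congr rfl fun i hi => Real.sq_sqrt (haS i hi).le
    have e3 : ∑ i ∈ S, (Real.sqrt (a i) / u i) ^ 2 = ∑ i ∈ S, a i / u i ^ 2 := by
      refine Finset.sum_congr rfl fun i hi => ?_
      rw [div_pow, Real.sq_sqrt (haS i hi).le]
    rwa [e1, e2, e3] at h1
  -- On T : M * ∑ a/v^2 ≤ ∑ (a/v)^2 ≤ (∑ a/v)^2
  have hT1 : M * ∑ j ∈ T, a j / v j ^ 2 ≤ ∑ j ∈ T, (a j / v j) ^ 2 := by
    rw [Finset.mul_sum]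
    refine Finset.sum_le_sum fun j hj => ?_
    have haj := haT j hj
    have hvj := hv j hj
    rw [div_pow, mul_div_assoc']
    gcongr
    nlinarith [hM j hj]
  have hT2 : ∑ j ∈ T, (a j / v j) ^ 2 ≤ (∑ j ∈ T, a j / v j) ^ 2 :=
    Finset.sum_sq_le_sq_sum_of_nonneg fun j hj => div_nonneg (haT j hj).le (hv j hj).le
  have hPnn : 0 ≤ ∑ i ∈ S, a i / u i :=
    Finset.sum_nonneg fun i hi => div_nonneg (haS i hi).le (hu i hi).le
  have hRnn : 0 ≤ ∑ j ∈ T, a j / v j :=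
    Finset.sum_nonneg fun j hj => div_nonneg (haT j hj).le (hv j hj).le
  have hsq : (∑ i ∈ S, a i / u i) ^ 2 ≤ (∑ j ∈ T, a j / v j) ^ 2 := by
    calc (∑ i ∈ S, a i / u i) ^ 2 ≤ M * ∑ i ∈ S, a i / u i ^ 2 := hCS
    _ ≤ M * ∑ j ∈ T, a j / v j ^ 2 := by nlinarith
    _ ≤ ∑ j ∈ T, (a j / v j) ^ 2 := hT1
    _ ≤ (∑ j ∈ T, a j / v j) ^ 2 := hT2
  nlinarith

/-- Step 1 of Case 4 in the necessity proof of Theorem 3.1(a). -/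
theorem case4_step1 {ι : Type*} [DecidableEq ι] (S1 S2 S3 S4 : Finset ι)
    (hS1 : S1.Nonempty) (hS2 : S2.Nonempty) (hS3 : S3.Nonempty) (hS4 : S4.Nonempty)
    (a d : ι → ℝ) (z₀ : ℝ)
    (ha : ∀ i ∈ S1 ∪ S2 ∪ S3 ∪ S4, 0 < a i)
    (hpos14 : ∀ i ∈ S1 ∪ S4, 0 < z₀ + d i)
    (hpos23 : ∀ i ∈ S2 ∪ S3, 0 < d i - z₀)
    (h14 : ∀ j ∈ S4, ∑ i ∈ S1, a i ≤ a j)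
    (h23 : ∀ j ∈ S3, ∑ i ∈ S2, a i ≤ a j)
    (hfirst : ∑ i ∈ S3, a i / (d i - z₀) + ∑ i ∈ S4, a i / (z₀ + d i)
            < ∑ i ∈ S1, a i / (z₀ + d i) + ∑ i ∈ S2, a i / (d i - z₀))
    (hsecond : ∑ i ∈ S1, a i / (z₀ + d i) ^ 2 + ∑ i ∈ S3, a i / (d i - z₀) ^ 2
             = ∑ i ∈ S2, a i / (d i - z₀) ^ 2 + ∑ i ∈ S4, a i / (z₀ + d i) ^ 2) :
    ∑ i ∈ S4, a i / (z₀ + d i) ^ 2 < ∑ i ∈ S1, a i / (z₀ + d i) ^ 2 := by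
  have ha1 : ∀ i ∈ S1, 0 < a i := fun i hi => ha i (by simp [hi])
  have ha2 : ∀ i ∈ S2, 0 < a i := fun i hi => ha i (by simp [hi])
  have ha3 : ∀ i ∈ S3, 0 < a i := fun i hi => ha i (by simp [hi])
  have ha4 : ∀ i ∈ S4, 0 < a i := fun i hi => ha i (by simp [hi])
  have hu1 : ∀ i ∈ S1, 0 < z₀ + d i := fun i hi => hpos14 i (by simp [hi])
  have hu4 : ∀ i ∈ S4, 0 < z₀ + d i := fun i hi => hpos14 i (by simp [hi])
  have hv2 : ∀ i ∈ S2, 0 < d i - z₀ := fun i hi => hpos23 i (by simp [hi])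
  have hv3 : ∀ i ∈ S3, 0 < d i - z₀ := fun i hi => hpos23 i (by simp [hi])
  by_contra hcon
  push_neg at hcon
  have hB : ∑ i ∈ S2, a i / (d i - z₀) ^ 2 ≤ ∑ i ∈ S3, a i / (d i - z₀) ^ 2 := by
    linarith
  have k1 : ∑ i ∈ S1, a i / (z₀ + d i) ≤ ∑ j ∈ S4, a j / (z₀ + d j) :=
    case4_key S1 S4 a (fun i => z₀ + d i) (fun i => z₀ + d i)
      ha1 ha4 hu1 hu4 h14 hS1 hcon
  have k2 : ∑ i ∈ S2, a i / (d i - z₀) ≤ ∑ j ∈ S3, a j / (d j - z₀) :=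
    case4_key S2 S3 a (fun i => d i - z₀) (fun i => d i - z₀)
      ha2 ha3 hv2 hv3 h23 hS2 hB
  linarith
end

section
/- Let (b_i)_{i∈S} be a non-empty finite family of positive real numbers, let (t_i)_{i∈S} be positive real numbers, and let s > 0 be a real number with s ≤ b_i for all i ∈ S. Then (Σ_{i∈S} b_i/t_i²)³ ≥ (Σ_{i∈S} b_i/t_i³)² · s. (This is inequality (mihuo 53) from Step 3 of Case 4 in the necessity proof of Theorem 3.1(a), with b_i = a_i for i ∈ S₄, t_i = z₀ + d_i, and s = Σ_{i∈S₁} a_i.) -/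
/-- Inequality (mihuo 53) from Step 3 of Case 4 in the necessity proof of Theorem 3.1(a):
for positive `b i`, `t i` and `0 < s ≤ b i`, one has `(∑ b/t²)³ ≥ (∑ b/t³)² · s`. -/
theorem mihuo53 {ι : Type*} (S : Finset ι) (hS : S.Nonempty)
    (b t : ι → ℝ) (hb : ∀ i ∈ S, 0 < b i) (ht : ∀ i ∈ S, 0 < t i)
    (s : ℝ) (hs : 0 < s) (hsb : ∀ i ∈ S, s ≤ b i) :
    (∑ i ∈ S, b i / (t i) ^ 3) ^ 2 * s ≤ (∑ i ∈ S, b i / (t i) ^ 2) ^ 3 := by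
  set A := ∑ i ∈ S, b i / (t i) ^ 2 with hA
  have hAnn : 0 ≤ A := Finset.sum_nonneg fun i hi =>
    div_nonneg (hb i hi).le (pow_nonneg (ht i hi).le 2)
  have hCS : (∑ i ∈ S, b i / (t i) ^ 3) ^ 2 ≤ A * ∑ i ∈ S, b i / (t i) ^ 4 := by
    have := Finset.sum_mul_sq_le_sq_mul_sq S (fun i => Real.sqrt (b i) / t i)
      (fun i => Real.sqrt (b i) / (t i) ^ 2)
    calc (∑ i ∈ S, b i / (t i) ^ 3) ^ 2
        = (∑ i ∈ S, (Real.sqrt (b i) / t i) * (Real.sqrt (b i) / (t i) ^ 2)) ^ 2 := by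
          congr 1
          refine Finset.sum_congr rfl fun i hi => ?_
          rw [div_mul_div_comm, Real.mul_self_sqrt (hb i hi).le]
          ring
      _ ≤ (∑ i ∈ S, (Real.sqrt (b i) / t i) ^ 2) * ∑ i ∈ S, (Real.sqrt (b i) / (t i) ^ 2) ^ 2 :=
          this
      _ = A * ∑ i ∈ S, b i / (t i) ^ 4 := by
          rw [hA]
          congr 1 <;> refine Finset.sum_congr rfl fun i hi => ?_ <;>
            rw [div_pow, Real.sq_sqrt (hb i hi).le] <;> ring
  have h2 : (∑ i ∈ S, b i / (t i) ^ 4) * s ≤ A ^ 2 := by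
    calc (∑ i ∈ S, b i / (t i) ^ 4) * s = ∑ i ∈ S, b i / (t i) ^ 4 * s := by
          rw [Finset.sum_mul]
      _ ≤ ∑ i ∈ S, (b i / (t i) ^ 2) ^ 2 := by
          refine Finset.sum_le_sum fun i hi => ?_
          have htp := pow_pos (ht i hi) 4
          rw [div_pow]
          rw [div_mul_eq_mul_div, div_le_div_iff₀ htp (pow_pos (pow_pos (ht i hi) 2) 2)]
          have : ((t i) ^ 2) ^ 2 = (t i) ^ 4 := by ring
          rw [this]
          have hbs : b i * s ≤ b i ^ 2 := by
            have := mul_le_mul_of_nonneg_left (hsb i hi) (hb i hi).le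
            nlinarith
          nlinarith [htp.le, hbs]
      _ ≤ A ^ 2 := Finset.sum_sq_le_sq_sum_of_nonneg fun i hi =>
          div_nonneg (hb i hi).le (pow_nonneg (ht i hi).le 2)
  calc (∑ i ∈ S, b i / (t i) ^ 3) ^ 2 * s ≤ (A * ∑ i ∈ S, b i / (t i) ^ 4) * s :=
        mul_le_mul_of_nonneg_right hCS hs.le
    _ = A * ((∑ i ∈ S, b i / (t i) ^ 4) * s) := by ring
    _ ≤ A * A ^ 2 := mul_le_mul_of_nonneg_left h2 hAnn
    _ = A ^ 3 := by ring
end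

section
/- Let (a_i)_{i∈S} be a non-empty finite family of positive real numbers, let (y_i)_{i∈S} be positive real numbers, and let a₀ > 0, y₀ > 0 be real numbers with a₀ ≥ Σ_{i∈S} a_i. Then it is impossible that both Σ_{i∈S} a_i/y_i² > a₀/y₀² and Σ_{i∈S} a_i/y_i³ ≤ a₀/y₀³ hold. (This is the incompatibility of conditions (quan 1) and (quan 2) established in Step 4 of Case 4 in the necessity proof of Theorem 3.1(a), with y_i = z₀ + d_i and y₀ = z₀ + d₀.) -/
/-- Step 4 of Case 4 in the necessity proof of Theorem 3.1(a): for positive `a i`, `y i`,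
`a₀ > 0`, `y₀ > 0` with `a₀ ≥ ∑ a i`, it is impossible that both
`∑ a_i/y_i² > a₀/y₀²` and `∑ a_i/y_i³ ≤ a₀/y₀³` hold. -/
theorem quan_incompatible {ι : Type*} (S : Finset ι) (hS : S.Nonempty)
    (a y : ι → ℝ) (ha : ∀ i ∈ S, 0 < a i) (hy : ∀ i ∈ S, 0 < y i)
    (a₀ y₀ : ℝ) (ha₀ : 0 < a₀) (hy₀ : 0 < y₀) (hsum : ∑ i ∈ S, a i ≤ a₀) :
    ¬ (a₀ / y₀ ^ 2 < ∑ i ∈ S, a i / (y i) ^ 2 ∧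
       ∑ i ∈ S, a i / (y i) ^ 3 ≤ a₀ / y₀ ^ 3) := by
  rintro ⟨h1, h2⟩
  set A := ∑ i ∈ S, a i with hA
  set B := ∑ i ∈ S, a i / y i with hB
  set C := ∑ i ∈ S, a i / y i ^ 2 with hC
  set D := ∑ i ∈ S, a i / y i ^ 3 with hD
  have hApos : 0 < A := Finset.sum_pos ha hS
  have hBpos : 0 < B :=
    Finset.sum_pos (fun i hi => div_pos (ha i hi) (hy i hi)) hS
  have hCpos : 0 < C :=
    Finset.sum_pos (fun i hi => div_pos (ha i hi) (pow_pos (hy i hi) 2)) hS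
  have hDpos : 0 < D :=
    Finset.sum_pos (fun i hi => div_pos (ha i hi) (pow_pos (hy i hi) 3)) hS
  -- Cauchy–Schwarz: C² ≤ B·D
  have cs1 : C ^ 2 ≤ B * D := by
    refine Finset.sum_sq_le_sum_mul_sum_of_sq_eq_mul S
      (fun i hi => (div_pos (ha i hi) (hy i hi)).le)
      (fun i hi => (div_pos (ha i hi) (pow_pos (hy i hi) 3)).le)
      (fun i hi => ?_)
    have hyi := (hy i hi).ne'
    field_simp
  -- Cauchy–Schwarz: B² ≤ A·C
  have cs2 : B ^ 2 ≤ A * C := by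
    refine Finset.sum_sq_le_sum_mul_sum_of_sq_eq_mul S
      (fun i hi => (ha i hi).le)
      (fun i hi => (div_pos (ha i hi) (pow_pos (hy i hi) 2)).le)
      (fun i hi => ?_)
    have hyi := (hy i hi).ne'
    field_simp
  -- combine: C³ ≤ A·D²
  have key : C ^ 3 ≤ A * D ^ 2 := by
    have h4 : C ^ 4 ≤ (A * C) * D ^ 2 := by
      calc C ^ 4 = (C ^ 2) ^ 2 := by ring
        _ ≤ (B * D) ^ 2 := pow_le_pow_left₀ (sq_nonneg C) cs1 2
        _ = B ^ 2 * D ^ 2 := by ring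
        _ ≤ (A * C) * D ^ 2 := by gcongr
    nlinarith [hCpos, h4]
  -- final contradiction
  have hD2 : D ^ 2 ≤ (a₀ / y₀ ^ 3) ^ 2 := by gcongr
  have hfin : C ^ 3 ≤ (a₀ / y₀ ^ 2) ^ 3 := by
    have : A * D ^ 2 ≤ a₀ * (a₀ / y₀ ^ 3) ^ 2 := by
      apply mul_le_mul hsum hD2 (sq_nonneg D) ha₀.le
    have heq : a₀ * (a₀ / y₀ ^ 3) ^ 2 = (a₀ / y₀ ^ 2) ^ 3 := by
      field_simp
    linarith [key, this, heq ▸ this]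
  have : (a₀ / y₀ ^ 2) ^ 3 < C ^ 3 := by
    gcongr
  linarith
end

section
/- Let (b_j)_{j∈J} and (v_j)_{j∈J} be non-empty finite families of positive real numbers, and let (c_i)_{i∈I} and (w_i)_{i∈I} be non-empty finite families of positive real numbers, such that b_j ≥ Σ_{i∈I} c_i for every j ∈ J. Then it is impossible that both Σ_{j∈J} b_j/v_j < Σ_{i∈I} c_i/w_i and Σ_{j∈J} b_j/v_j² > Σ_{i∈I} c_i/w_i² hold. (This is the incompatibility of inequalities (more1) and (more2) established in Case 2 of the necessity proof of Theorem 3.1(b)(3), with b_j = a_j for j ∈ S₂, c_i = a_i for i ∈ S₃, and v_j, w_i the corresponding positive denominators d_j − z₀, d_i − z₀.) -/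
/-- Incompatibility of inequalities (more1) and (more2) from Case 2 of the necessity proof of
Theorem 3.1(b)(3): if `b j ≥ ∑ c i` for all `j`, then it is impossible that both
`∑ b_j/v_j < ∑ c_i/w_i` and `∑ b_j/v_j² > ∑ c_i/w_i²` hold. -/
theorem more_incompatible {κ ι : Type*} (J : Finset κ) (I : Finset ι)
    (hJ : J.Nonempty) (hI : I.Nonempty)
    (b v : κ → ℝ) (c w : ι → ℝ)
    (hb : ∀ j ∈ J, 0 < b j) (hv : ∀ j ∈ J, 0 < v j)
    (hc : ∀ i ∈ I, 0 < c i) (hw : ∀ i ∈ I, 0 < w i)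
    (hbc : ∀ j ∈ J, ∑ i ∈ I, c i ≤ b j) :
    ¬ ((∑ j ∈ J, b j / v j < ∑ i ∈ I, c i / w i) ∧
       (∑ i ∈ I, c i / (w i) ^ 2 < ∑ j ∈ J, b j / (v j) ^ 2)) := by
  rintro ⟨h1, h2⟩
  have hC : 0 < ∑ i ∈ I, c i := Finset.sum_pos hc hI
  have hA : 0 < ∑ j ∈ J, b j / v j :=
    Finset.sum_pos (fun j hj => div_pos (hb j hj) (hv j hj)) hJ
  -- Cauchy–Schwarz: (∑ c/w)² ≤ (∑ c)(∑ c/w²)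
  have key1 : (∑ i ∈ I, c i / w i) ^ 2 ≤ (∑ i ∈ I, c i) * ∑ i ∈ I, c i / (w i) ^ 2 := by
    have h := Finset.sum_mul_sq_le_sq_mul_sq I (fun i => Real.sqrt (c i))
      (fun i => Real.sqrt (c i) / w i)
    calc (∑ i ∈ I, c i / w i) ^ 2
        = (∑ i ∈ I, Real.sqrt (c i) * (Real.sqrt (c i) / w i)) ^ 2 := by
          congr 1
          refine Finset.sum_congr rfl fun i hi => ?_
          rw [mul_div_assoc', Real.mul_self_sqrt (hc i hi).le]
      _ ≤ (∑ i ∈ I, Real.sqrt (c i) ^ 2) * ∑ i ∈ I, (Real.sqrt (c i) / w i) ^ 2 := h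
      _ = (∑ i ∈ I, c i) * ∑ i ∈ I, c i / (w i) ^ 2 := by
          congr 1
          · exact Finset.sum_congr rfl fun i hi => Real.sq_sqrt (hc i hi).le
          · exact Finset.sum_congr rfl fun i hi => by
              rw [div_pow, Real.sq_sqrt (hc i hi).le]
  -- termwise: C * b/v² ≤ (b/v)²
  have key2a : (∑ i ∈ I, c i) * (∑ j ∈ J, b j / (v j) ^ 2) ≤ ∑ j ∈ J, (b j / v j) ^ 2 := by
    rw [Finset.mul_sum]
    refine Finset.sum_le_sum fun j hj => ?_
    rw [div_pow, sq (b j), ← mul_div_assoc]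
    gcongr
    · exact (hb j hj).le
    · exact hbc j hj
  -- sum of squares ≤ square of sum (nonneg terms)
  have key2b : ∑ j ∈ J, (b j / v j) ^ 2 ≤ (∑ j ∈ J, b j / v j) ^ 2 := by
    rw [sq]
    calc ∑ j ∈ J, (b j / v j) ^ 2
        ≤ ∑ j ∈ J, (b j / v j) * (∑ k ∈ J, b k / v k) := by
          refine Finset.sum_le_sum fun j hj => ?_
          rw [sq]
          exact mul_le_mul_of_nonneg_left
            (Finset.single_le_sum (fun k hk => (div_pos (hb k hk) (hv k hk)).le) hj)
            (div_pos (hb j hj) (hv j hj)).le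
      _ = (∑ j ∈ J, b j / v j) * (∑ j ∈ J, b j / v j) := by rw [← Finset.sum_mul]
  have hmid : (∑ i ∈ I, c i) * (∑ i ∈ I, c i / (w i) ^ 2)
      < (∑ i ∈ I, c i) * (∑ j ∈ J, b j / (v j) ^ 2) :=
    mul_lt_mul_of_pos_left h2 hC
  nlinarith [key1, key2a, key2b, hmid, h1, hA]
end

section
/- Let A > 0 be a real number, and let (a_i)_{i∈S} and (e_i)_{i∈S} be finite families of positive real numbers. Define 𝒢(x) := (Σ_{i∈S} a_i + A)·(Σ_{i∈S} a_i e_i² + A − A x²) − (Σ_{i∈S} a_i e_i + A − A x)². Then 𝒢(x) ≥ 0 for every x ∈ (0, 1]. (This is the claim, established in Case 2.1 of the necessity proof of Theorem 3.1(b)(3), that the concave quadratic 𝒢 is nonnegative on (0,1] because 𝒢(0) ≥ 0 and 𝒢(1) ≥ 0 by the Cauchy–Schwarz inequality.) -/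
/-- The quadratic `𝒢` from Case 2.1 of the necessity proof of Theorem 3.1(b)(3) is
nonnegative on `(0, 1]`. -/
theorem Gquad_nonneg {ι : Type*} (S : Finset ι) (A : ℝ) (hA : 0 < A)
    (a e : ι → ℝ) (ha : ∀ i ∈ S, 0 < a i) (he : ∀ i ∈ S, 0 < e i) :
    ∀ x ∈ Set.Ioc (0 : ℝ) 1,
      0 ≤ (∑ i ∈ S, a i + A) * (∑ i ∈ S, a i * (e i) ^ 2 + A - A * x ^ 2)
            - (∑ i ∈ S, a i * e i + A - A * x) ^ 2 := by
  intro x hx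
  obtain ⟨hx0, hx1⟩ := hx
  -- Cauchy–Schwarz: (∑ a e)² ≤ (∑ a)(∑ a e²)
  have cs : (∑ i ∈ S, a i * e i) ^ 2 ≤ (∑ i ∈ S, a i) * ∑ i ∈ S, a i * e i ^ 2 := by
    have h := Finset.sum_mul_sq_le_sq_mul_sq S (fun i => Real.sqrt (a i))
      (fun i => Real.sqrt (a i) * e i)
    have h1 : ∑ i ∈ S, Real.sqrt (a i) * (Real.sqrt (a i) * e i)
        = ∑ i ∈ S, a i * e i := by
      refine Finset.sum_congr rfl fun i hi => ?_
      rw [← mul_assoc, Real.mul_self_sqrt (ha i hi).le]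
    have h2 : ∑ i ∈ S, Real.sqrt (a i) ^ 2 = ∑ i ∈ S, a i := by
      refine Finset.sum_congr rfl fun i hi => ?_
      rw [Real.sq_sqrt (ha i hi).le]
    have h3 : ∑ i ∈ S, (Real.sqrt (a i) * e i) ^ 2 = ∑ i ∈ S, a i * e i ^ 2 := by
      refine Finset.sum_congr rfl fun i hi => ?_
      rw [mul_pow, Real.sq_sqrt (ha i hi).le]
    simpa [h1, h2, h3] using h
  have hsum : 0 ≤ ∑ i ∈ S, a i * (e i - 1) ^ 2 :=
    Finset.sum_nonneg fun i hi => mul_nonneg (ha i hi).le (sq_nonneg _)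
  have hexp : ∑ i ∈ S, a i * (e i - 1) ^ 2
      = (∑ i ∈ S, a i * e i ^ 2) - 2 * (∑ i ∈ S, a i * e i) + ∑ i ∈ S, a i := by
    calc ∑ i ∈ S, a i * (e i - 1) ^ 2
        = ∑ i ∈ S, (a i * e i ^ 2 - 2 * (a i * e i) + a i) :=
          Finset.sum_congr rfl fun i _ => by ring
      _ = (∑ i ∈ S, a i * e i ^ 2) - 2 * (∑ i ∈ S, a i * e i) + ∑ i ∈ S, a i := by
          rw [Finset.sum_add_distrib, Finset.sum_sub_distrib, ← Finset.mul_sum]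
  have hsa : 0 ≤ ∑ i ∈ S, a i := Finset.sum_nonneg fun i hi => (ha i hi).le
  have hsae2 : 0 ≤ ∑ i ∈ S, a i * e i ^ 2 :=
    Finset.sum_nonneg fun i hi => mul_nonneg (ha i hi).le (sq_nonneg _)
  rw [hexp] at hsum
  have hG0 : 0 ≤ (∑ i ∈ S, a i + A) * (∑ i ∈ S, a i * e i ^ 2 + A)
      - (∑ i ∈ S, a i * e i + A) ^ 2 := by
    nlinarith [cs, mul_nonneg hA.le hsum]
  have hG1 : 0 ≤ (∑ i ∈ S, a i + A) * (∑ i ∈ S, a i * e i ^ 2)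
      - (∑ i ∈ S, a i * e i) ^ 2 := by
    nlinarith [cs, mul_nonneg hA.le hsae2]
  nlinarith [mul_nonneg (sub_nonneg.2 hx1) hG0, mul_nonneg hx0.le hG1,
    mul_nonneg (mul_nonneg hA.le hsa) (mul_nonneg hx0.le (sub_nonneg.2 hx1)),
    mul_nonneg (mul_nonneg hA.le hA.le) (mul_nonneg hx0.le (sub_nonneg.2 hx1))]
end
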